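/- arXiv:2603.16190 — 9 statements merged into one kernel-verified Lean document; each statement's English description precedes it below -/
import Mathlib

section
/- Let p₁, p₂, p₃, p₄ > 0 and c₁, c₂, c₃ > 0 be real constants with p₃/p₁ + p₄/p₂ > 1. Then there exists a constant c ∈ (0,1) such that c₁ x^{p₁} + c₂ y^{p₂} ≥ c₃ x^{p₃} y^{p₄} for all 0 < x, y < c. -/
open Real

theorem power_domination (p₁ p₂ p₃ p₄ c₁ c₂ c₃ : ℝ)
    (hp₁ : 0 < p₁) (hp₂ : 0 < p₂) (hp₃ : 0 < p₃) (hp₄ : 0 < p₄)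
    (hc₁ : 0 < c₁) (hc₂ : 0 < c₂) (hc₃ : 0 < c₃)
    (h : p₃ / p₁ + p₄ / p₂ > 1) :
    ∃ c : ℝ, 0 < c ∧ c < 1 ∧ ∀ x y : ℝ, 0 < x → x < c → 0 < y → y < c →
      c₁ * x ^ p₁ + c₂ * y ^ p₂ ≥ c₃ * x ^ p₃ * y ^ p₄ := by
  set s : ℝ := p₃ / p₁ + p₄ / p₂ - 1 with hs
  have hspos : 0 < s := by simp only [hs]; linarith
  have hKpos : 0 < min c₁ c₂ / c₃ := div_pos (lt_min hc₁ hc₂) hc₃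
  set K : ℝ := min c₁ c₂ / c₃ with hK
  set ε : ℝ := min (1/2) (K ^ (1/s)) with hε
  have hεpos : 0 < ε := lt_min (by norm_num) (rpow_pos_of_pos hKpos _)
  set c : ℝ := min (1/2) (min (ε ^ (1/p₁)) (ε ^ (1/p₂))) with hc
  have hcpos : 0 < c :=
    lt_min (by norm_num) (lt_min (rpow_pos_of_pos hεpos _) (rpow_pos_of_pos hεpos _))
  refine ⟨c, hcpos, lt_of_le_of_lt (min_le_left _ _) (by norm_num), ?_⟩
  intro x y hx hxc hy hyc
  set m : ℝ := max (x ^ p₁) (y ^ p₂) with hm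
  have ha : 0 < x ^ p₁ := rpow_pos_of_pos hx _
  have hb : 0 < y ^ p₂ := rpow_pos_of_pos hy _
  have hmpos : 0 < m := lt_max_of_lt_left ha
  have hxp : x ^ p₁ < ε := by
    have h1 : x ^ p₁ < c ^ p₁ := rpow_lt_rpow hx.le hxc hp₁
    have h2 : c ^ p₁ ≤ (ε ^ (1/p₁)) ^ p₁ :=
      rpow_le_rpow hcpos.le (le_trans (min_le_right _ _) (min_le_left _ _)) hp₁.le
    have h3 : (ε ^ (1/p₁)) ^ p₁ = ε := by
      rw [← rpow_mul hεpos.le, one_div, inv_mul_cancel₀ hp₁.ne', rpow_one]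
    linarith
  have hyp : y ^ p₂ < ε := by
    have h1 : y ^ p₂ < c ^ p₂ := rpow_lt_rpow hy.le hyc hp₂
    have h2 : c ^ p₂ ≤ (ε ^ (1/p₂)) ^ p₂ :=
      rpow_le_rpow hcpos.le (le_trans (min_le_right _ _) (min_le_right _ _)) hp₂.le
    have h3 : (ε ^ (1/p₂)) ^ p₂ = ε := by
      rw [← rpow_mul hεpos.le, one_div, inv_mul_cancel₀ hp₂.ne', rpow_one]
    linarith
  have hmε : m < ε := max_lt hxp hyp
  have hms : m ^ s ≤ K := by
    have h1 : m ^ s ≤ ε ^ s := rpow_le_rpow hmpos.le hmε.le hspos.le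
    have h2 : ε ^ s ≤ (K ^ (1/s)) ^ s := rpow_le_rpow hεpos.le (min_le_right _ _) hspos.le
    have h3 : (K ^ (1/s)) ^ s = K := by
      rw [← rpow_mul hKpos.le, one_div, inv_mul_cancel₀ hspos.ne', rpow_one]
    linarith
  have hx3 : x ^ p₃ ≤ m ^ (p₃ / p₁) := by
    have hxe : x ^ p₃ = (x ^ p₁) ^ (p₃ / p₁) := by
      rw [← rpow_mul hx.le]; congr 1; field_simp
    rw [hxe]
    exact rpow_le_rpow (rpow_nonneg hx.le _) (le_max_left _ _) (div_nonneg hp₃.le hp₁.le)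
  have hy4 : y ^ p₄ ≤ m ^ (p₄ / p₂) := by
    have hye : y ^ p₄ = (y ^ p₂) ^ (p₄ / p₂) := by
      rw [← rpow_mul hy.le]; congr 1; field_simp
    rw [hye]
    exact rpow_le_rpow (rpow_nonneg hy.le _) (le_max_right _ _) (div_nonneg hp₄.le hp₂.le)
  have hprod : x ^ p₃ * y ^ p₄ ≤ m * m ^ s := by
    calc x ^ p₃ * y ^ p₄ ≤ m ^ (p₃ / p₁) * m ^ (p₄ / p₂) :=
          mul_le_mul hx3 hy4 (rpow_nonneg hy.le _) (rpow_nonneg hmpos.le _)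
      _ = m * m ^ s := by
          rw [← rpow_add hmpos, show p₃ / p₁ + p₄ / p₂ = 1 + s by rw [hs]; ring,
            rpow_add hmpos, rpow_one]
  have hmsum : m ≤ x ^ p₁ + y ^ p₂ := max_le (by linarith) (by linarith)
  have hminle : min c₁ c₂ * m ≤ c₁ * x ^ p₁ + c₂ * y ^ p₂ := by
    have h1 : min c₁ c₂ ≤ c₁ := min_le_left c₁ c₂
    have h2 : min c₁ c₂ ≤ c₂ := min_le_right c₁ c₂
    have h0 : 0 < min c₁ c₂ := lt_min hc₁ hc₂
    nlinarith [mul_le_mul_of_nonneg_left hmsum h0.le]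
  have hkey : c₃ * (x ^ p₃ * y ^ p₄) ≤ min c₁ c₂ * m := by
    have h1 : c₃ * (x ^ p₃ * y ^ p₄) ≤ c₃ * (m * m ^ s) :=
      mul_le_mul_of_nonneg_left hprod hc₃.le
    have h2 : c₃ * (m * m ^ s) ≤ c₃ * (m * K) := by
      have := mul_le_mul_of_nonneg_left hms hmpos.le
      nlinarith
    have h3 : c₃ * (m * K) = min c₁ c₂ * m := by
      rw [hK]; field_simp
    linarith
  linarith [hkey]
end

section
/- Let κ₁, κ₂ > 0, θ₁, θ₂ ≥ 0, let r₂ be a real number with r₂ > θ₂ − 1, and let ρ₁, ρ₂ > max(θ₁, θ₂). Assume (r₂ + 1 − θ₂)/κ₂ > (1 + ρ₂ + κ₁ − θ₂)/(1 + ρ₁ + κ₂ − θ₁). Then there exist constants δ, C > 0 such that for every integer m ≥ 1 and all real 0 < x, y ≤ 1/m one has y^{θ₂−1−ρ₂} x^{κ₂} + x^{θ₁−1−ρ₁} y^{κ₁} ≥ C · m^{δ} · y^{r₂−ρ₂}. -/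
/-! Write `A, B` for the two summands. With the weight `t = a / (a + κ₂)`, `a = 1 + ρ₁ - θ₁`, the
power of `x` cancels in `A ^ t * B ^ (1 - t)`, so weighted AM-GM bounds `A + B` below by a pure
power `y ^ e`. The hypothesis on the exponents says exactly `e < r₂ - ρ₂`, and `y ≤ 1 / m` turns
the gap `δ = r₂ - ρ₂ - e` into the factor `m ^ δ`. -/

open Real

lemma rpow_mul_rpow_le_add {A B w₁ w₂ : ℝ} (hA : 0 ≤ A) (hB : 0 ≤ B) (hw₁ : 0 ≤ w₁)
    (hw₂ : 0 ≤ w₂) (hw : w₁ + w₂ = 1) : A ^ w₁ * B ^ w₂ ≤ A + B := by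
  calc A ^ w₁ * B ^ w₂ ≤ w₁ * A + w₂ * B := geom_mean_le_arith_mean2_weighted hw₁ hw₂ hA hB hw
    _ ≤ A + B := by nlinarith

lemma rpow_le_rpow_mul_rpow_add_rpow_mul_rpow {x y p q r s : ℝ} (hx : 0 < x) (hy : 0 < y)
    (hr : r ≤ 0) (hq : 0 ≤ q) (hrq : r < q) :
    y ^ ((p * -r + s * q) / (q - r)) ≤ y ^ p * x ^ q + x ^ r * y ^ s := by
  have hqr : 0 < q - r := sub_pos.2 hrq
  set w₁ := -r / (q - r) with hw₁
  set w₂ := q / (q - r) with hw₂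
  have hw : w₁ + w₂ = 1 := by rw [hw₁, hw₂]; field_simp; ring
  have hx_cancel : x ^ (q * w₁) * x ^ (r * w₂) = 1 := by
    rw [← rpow_add hx, hw₁, hw₂]; field_simp; simp
  have hy_exp : (p * -r + s * q) / (q - r) = p * w₁ + s * w₂ := by
    rw [hw₁, hw₂]; field_simp
  calc y ^ ((p * -r + s * q) / (q - r))
      = (y ^ p * x ^ q) ^ w₁ * (x ^ r * y ^ s) ^ w₂ := by
        rw [mul_rpow (by positivity) (by positivity), mul_rpow (by positivity) (by positivity),
          ← rpow_mul hy.le, ← rpow_mul hx.le, ← rpow_mul hx.le, ← rpow_mul hy.le, hy_exp,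
          rpow_add hy]
        linear_combination -(y ^ (p * w₁) * y ^ (s * w₂)) * hx_cancel
    _ ≤ y ^ p * x ^ q + x ^ r * y ^ s :=
        rpow_mul_rpow_le_add (by positivity) (by positivity)
          (div_nonneg (neg_nonneg.2 hr) hqr.le) (div_nonneg hq hqr.le) hw

lemma rpow_mul_rpow_le_rpow_sub {m y δ s : ℝ} (hm : 0 < m) (hy : 0 < y) (hym : y ≤ 1 / m)
    (hδ : 0 ≤ δ) : m ^ δ * y ^ s ≤ y ^ (s - δ) := by
  have hm_le : m ≤ y⁻¹ := by rw [le_inv_comm₀ hm hy]; simpa using hym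
  calc m ^ δ * y ^ s ≤ y⁻¹ ^ δ * y ^ s := by gcongr
    _ = y ^ (s - δ) := by rw [inv_rpow hy.le, ← rpow_neg hy.le, ← rpow_add hy]; ring_nf

theorem lemma_t3_2_general (κ₁ κ₂ θ₁ θ₂ r₂ ρ₁ ρ₂ : ℝ)
    (hκ₂ : 0 < κ₂)
    (hρ₁ : ρ₁ > max θ₁ θ₂)
    (h : (r₂ + 1 - θ₂) / κ₂ > (1 + ρ₂ + κ₁ - θ₂) / (1 + ρ₁ + κ₂ - θ₁)) :
    ∃ δ C : ℝ, 0 < δ ∧ 0 < C ∧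
      ∀ m : ℕ, 1 ≤ m → ∀ x y : ℝ, 0 < x → x ≤ 1 / (m : ℝ) → 0 < y → y ≤ 1 / (m : ℝ) →
        y ^ (θ₂ - 1 - ρ₂) * x ^ κ₂ + x ^ (θ₁ - 1 - ρ₁) * y ^ κ₁ ≥
          C * (m : ℝ) ^ δ * y ^ (r₂ - ρ₂) := by
  have ha : θ₁ - 1 - ρ₁ < 0 := by linarith [le_max_left θ₁ θ₂]
  set e := ((θ₂ - 1 - ρ₂) * -(θ₁ - 1 - ρ₁) + κ₁ * κ₂) / (κ₂ - (θ₁ - 1 - ρ₁))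
  have he : e < r₂ - ρ₂ := by
    rw [gt_iff_lt, div_lt_div_iff₀ (by linarith) hκ₂] at h
    rw [div_lt_iff₀ (by linarith)]
    linarith
  refine ⟨r₂ - ρ₂ - e, 1, by linarith, one_pos, fun m hm x y hx _ hy hym => ?_⟩
  calc 1 * (m : ℝ) ^ (r₂ - ρ₂ - e) * y ^ (r₂ - ρ₂)
      ≤ y ^ (r₂ - ρ₂ - (r₂ - ρ₂ - e)) := by
        rw [one_mul]; exact rpow_mul_rpow_le_rpow_sub (by positivity) hy hym (by linarith)
    _ = y ^ e := by ring_nf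
    _ ≤ _ := rpow_le_rpow_mul_rpow_add_rpow_mul_rpow hx hy ha.le hκ₂.le (by linarith)

theorem lemma_t3_2 (κ₁ κ₂ θ₁ θ₂ r₂ ρ₁ ρ₂ : ℝ)
    (hκ₁ : 0 < κ₁) (hκ₂ : 0 < κ₂) (hθ₁ : 0 ≤ θ₁) (hθ₂ : 0 ≤ θ₂)
    (hr₂ : r₂ > θ₂ - 1)
    (hρ₁ : ρ₁ > max θ₁ θ₂) (hρ₂ : ρ₂ > max θ₁ θ₂)
    (h : (r₂ + 1 - θ₂) / κ₂ > (1 + ρ₂ + κ₁ - θ₂) / (1 + ρ₁ + κ₂ - θ₁)) :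
    ∃ δ C : ℝ, 0 < δ ∧ 0 < C ∧
      ∀ m : ℕ, 1 ≤ m → ∀ x y : ℝ, 0 < x → x ≤ 1 / (m : ℝ) → 0 < y → y ≤ 1 / (m : ℝ) →
        y ^ (θ₂ - 1 - ρ₂) * x ^ κ₂ + x ^ (θ₁ - 1 - ρ₁) * y ^ κ₁ ≥
          C * (m : ℝ) ^ δ * y ^ (r₂ - ρ₂) :=
  lemma_t3_2_general κ₁ κ₂ θ₁ θ₂ r₂ ρ₁ ρ₂ hκ₂ hρ₁ h
end

section
/- Let a₁, a₂, b₁, b₂, κ₁, κ₂ > 0, θ₁, θ₂ ≥ 0, and let r₁, r₂ be real numbers with r₁ > θ₁ − 1 and r₂ > θ₂ − 1. Assume (a₁/b₁)^{1/(r₁+1−θ₁)} · (a₂/b₂)^{1/κ₂} ≥ 1, and let ρ₁, ρ₂ > max(θ₁, θ₂) satisfy (r₁ + 1 − θ₁)/κ₁ = κ₂/(r₂ + 1 − θ₂) = (1 + ρ₁ + κ₂ − θ₁)/(1 + ρ₂ + κ₁ − θ₂). Then there exists a constant δ₀ > 0 such that a₁ ρ₁ δ₀ x^{θ₁−1−ρ₁}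 y^{κ₁} + a₂ ρ₂ x^{κ₂} y^{θ₂−1−ρ₂} ≥ b₁ ρ₁ δ₀ x^{r₁−ρ₁} + b₂ ρ₂ y^{r₂−ρ₂} for all x, y > 0. -/
open Real



private lemma key_amgm (p d z x y γ1 γ2 e1 f1 e2 f2 g h : ℝ)
    (hp : 0 < p) (hp1 : p < 1) (hz : 0 < z) (hx : 0 < x) (hy : 0 < y) (hd : 0 < d)
    (hγ : γ1 * p + γ2 * (1 - p) = 0) (he : e1 * p + e2 * (1 - p) = g)
    (hf : f1 * p + f2 * (1 - p) = h) :
    d * x ^ g * y ^ h ≤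
      p * (d * z ^ γ1 * x ^ e1 * y ^ f1) + (1 - p) * (d * z ^ γ2 * x ^ e2 * y ^ f2) := by
  have hu : (0:ℝ) < d * z ^ γ1 * x ^ e1 * y ^ f1 := by positivity
  have hv : (0:ℝ) < d * z ^ γ2 * x ^ e2 * y ^ f2 := by positivity
  have key := Real.geom_mean_le_arith_mean2_weighted (w₁ := p) (w₂ := 1 - p)
      hp.le (by linarith) hu.le hv.le (by ring)
  refine le_trans (le_of_eq ?_) key
  have hL : (0:ℝ) < (d * z ^ γ1 * x ^ e1 * y ^ f1) ^ p * (d * z ^ γ2 * x ^ e2 * y ^ f2) ^ (1 - p) :=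
    mul_pos (rpow_pos_of_pos hu p) (rpow_pos_of_pos hv (1 - p))
  have l1 : Real.log (d * z ^ γ1 * x ^ e1 * y ^ f1)
      = Real.log d + γ1 * Real.log z + e1 * Real.log x + f1 * Real.log y := by
    rw [Real.log_mul (by positivity) (rpow_pos_of_pos hy f1).ne',
        Real.log_mul (by positivity) (rpow_pos_of_pos hx e1).ne',
        Real.log_mul hd.ne' (rpow_pos_of_pos hz γ1).ne',
        Real.log_rpow hz, Real.log_rpow hx, Real.log_rpow hy]
  have l2 : Real.log (d * z ^ γ2 * x ^ e2 * y ^ f2)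
      = Real.log d + γ2 * Real.log z + e2 * Real.log x + f2 * Real.log y := by
    rw [Real.log_mul (by positivity) (rpow_pos_of_pos hy f2).ne',
        Real.log_mul (by positivity) (rpow_pos_of_pos hx e2).ne',
        Real.log_mul hd.ne' (rpow_pos_of_pos hz γ2).ne',
        Real.log_rpow hz, Real.log_rpow hx, Real.log_rpow hy]
  have l0 : Real.log (d * x ^ g * y ^ h)
      = Real.log d + g * Real.log x + h * Real.log y := by
    rw [Real.log_mul (by positivity) (rpow_pos_of_pos hy h).ne',
        Real.log_mul hd.ne' (rpow_pos_of_pos hx g).ne',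
        Real.log_rpow hx, Real.log_rpow hy]
  rw [← Real.exp_log (show (0:ℝ) < d * x ^ g * y ^ h by positivity), ← Real.exp_log hL]
  congr 1
  rw [Real.log_mul (rpow_pos_of_pos hu p).ne' (rpow_pos_of_pos hv (1 - p)).ne',
    Real.log_rpow hu, Real.log_rpow hv, l0, l1, l2]
  linear_combination (-Real.log z) * hγ - (Real.log x) * he - (Real.log y) * hf

set_option maxHeartbeats 1600000 in
theorem lemma_t5_3 (a₁ a₂ b₁ b₂ κ₁ κ₂ θ₁ θ₂ r₁ r₂ ρ₁ ρ₂ : ℝ)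
    (ha₁ : 0 < a₁) (ha₂ : 0 < a₂) (hb₁ : 0 < b₁) (hb₂ : 0 < b₂)
    (hκ₁ : 0 < κ₁) (hκ₂ : 0 < κ₂) (hθ₁ : 0 ≤ θ₁) (hθ₂ : 0 ≤ θ₂)
    (hr₁ : r₁ > θ₁ - 1) (hr₂ : r₂ > θ₂ - 1)
    (hab : (a₁ / b₁) ^ (1 / (r₁ + 1 - θ₁)) * (a₂ / b₂) ^ (1 / κ₂) ≥ 1)
    (hρ₁ : ρ₁ > max θ₁ θ₂) (hρ₂ : ρ₂ > max θ₁ θ₂)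
    (heq₁ : (r₁ + 1 - θ₁) / κ₁ = κ₂ / (r₂ + 1 - θ₂))
    (heq₂ : κ₂ / (r₂ + 1 - θ₂) = (1 + ρ₁ + κ₂ - θ₁) / (1 + ρ₂ + κ₁ - θ₂)) :
    ∃ δ₀ : ℝ, 0 < δ₀ ∧ ∀ x y : ℝ, 0 < x → 0 < y →
      a₁ * ρ₁ * δ₀ * x ^ (θ₁ - 1 - ρ₁) * y ^ κ₁ + a₂ * ρ₂ * x ^ κ₂ * y ^ (θ₂ - 1 - ρ₂) ≥
        b₁ * ρ₁ * δ₀ * x ^ (r₁ - ρ₁) + b₂ * ρ₂ * y ^ (r₂ - ρ₂) := by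
  have hm₁ := le_max_left θ₁ θ₂
  have hm₂ := le_max_right θ₁ θ₂
  have hσ : 0 < 1 + ρ₂ - θ₂ := by linarith
  have hσ₁ : 0 < 1 + ρ₁ - θ₁ := by linarith
  have hα : 0 < r₁ + 1 - θ₁ := by linarith
  have hβ : 0 < r₂ + 1 - θ₂ := by linarith
  have hρ₁0 : 0 < ρ₁ := by linarith
  have hρ₂0 : 0 < ρ₂ := by linarith
  have hP : 0 < κ₁ + (1 + ρ₂ - θ₂) := by linarith
  have hab₂ : 0 < a₂ / b₂ := div_pos ha₂ hb₂
  have H1 : (r₁ + 1 - θ₁) * (r₂ + 1 - θ₂) = κ₂ * κ₁ :=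
    (div_eq_div_iff hκ₁.ne' hβ.ne').mp heq₁
  have H2 : κ₂ * (1 + ρ₂ + κ₁ - θ₂) = (1 + ρ₁ + κ₂ - θ₁) * (r₂ + 1 - θ₂) :=
    (div_eq_div_iff hβ.ne' (by linarith : (1 + ρ₂ + κ₁ - θ₂) ≠ 0)).mp heq₂
  have hPβ : r₂ + 1 - θ₂ < κ₁ + (1 + ρ₂ - θ₂) := by
    nlinarith [mul_pos hσ₁ hβ, hκ₂]
  have key2 : (θ₁ - 1 - ρ₁) * (1 + ρ₂ - θ₂) + κ₂ * κ₁ =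
      (r₁ - ρ₁) * (κ₁ + (1 + ρ₂ - θ₂)) := by
    apply mul_right_cancel₀ hκ₂.ne'
    linear_combination (-(κ₂ + (1 + ρ₁ - θ₁))) * H1 + (-(r₁ + 1 - θ₁)) * H2
  -- the scaling point T and its basic properties
  have hT : 0 < (a₂ / b₂) ^ (1 / (r₂ + 1 - θ₂)) := rpow_pos_of_pos hab₂ _
  have hTβ : ((a₂ / b₂) ^ (1 / (r₂ + 1 - θ₂))) ^ (r₂ + 1 - θ₂) = a₂ / b₂ := by
    rw [← Real.rpow_mul hab₂.le, one_div, inv_mul_cancel₀ hβ.ne', Real.rpow_one]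
  have hab1 : b₁ ≤ a₁ * ((a₂ / b₂) ^ (1 / (r₂ + 1 - θ₂))) ^ κ₁ := by
    have h0 : (1:ℝ) ≤ ((a₁ / b₁) ^ (1 / (r₁ + 1 - θ₁)) * (a₂ / b₂) ^ (1 / κ₂)) ^ (r₁ + 1 - θ₁) := by
      calc (1:ℝ) = 1 ^ (r₁ + 1 - θ₁) := (Real.one_rpow _).symm
      _ ≤ _ := Real.rpow_le_rpow zero_le_one hab hα.le
    rw [Real.mul_rpow (by positivity) (by positivity),
      ← Real.rpow_mul (by positivity), ← Real.rpow_mul hab₂.le,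
      one_div, inv_mul_cancel₀ hα.ne', Real.rpow_one,
      show 1 / κ₂ * (r₁ + 1 - θ₁) = 1 / (r₂ + 1 - θ₂) * κ₁ by
        field_simp; linear_combination H1,
      Real.rpow_mul hab₂.le] at h0
    rw [div_mul_eq_mul_div, le_div_iff₀ hb₁] at h0
    linarith
  obtain ⟨T, hTdef⟩ : ∃ t : ℝ, t = (a₂ / b₂) ^ (1 / (r₂ + 1 - θ₂)) := ⟨_, rfl⟩
  rw [← hTdef] at hT hTβ hab1
  have hTκ : 0 < T ^ κ₁ := rpow_pos_of_pos hT _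
  have hTσ : 0 < T ^ (1 + ρ₂ - θ₂) := rpow_pos_of_pos hT _
  obtain ⟨δ₀, hδdef⟩ : ∃ d : ℝ,
      d = (r₂ + 1 - θ₂) * a₂ * ρ₂ / (κ₁ * b₁ * ρ₁ * T ^ (1 + ρ₂ - θ₂)) := ⟨_, rfl⟩
  have hδ₀ : 0 < δ₀ := by
    rw [hδdef]
    exact div_pos (mul_pos (mul_pos hβ ha₂) hρ₂0)
      (mul_pos (mul_pos (mul_pos hκ₁ hb₁) hρ₁0) hTσ)
  refine ⟨δ₀, hδ₀, fun x y hx hy => ?_⟩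
  obtain ⟨lam, hlamdef⟩ : ∃ l : ℝ,
      l = (1 + ρ₂ - θ₂) * b₁ / ((κ₁ + (1 + ρ₂ - θ₂)) * a₁ * T ^ κ₁) := ⟨_, rfl⟩
  have hlam : 0 < lam := by
    rw [hlamdef]
    exact div_pos (mul_pos hσ hb₁) (mul_pos (mul_pos hP ha₁) hTκ)
  -- exponent identities
  have I1 : (-κ₁) * ((1 + ρ₂ - θ₂) / (κ₁ + (1 + ρ₂ - θ₂))) +
      (1 + ρ₂ - θ₂) * (1 - (1 + ρ₂ - θ₂) / (κ₁ + (1 + ρ₂ - θ₂))) = 0 := by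
    field_simp; ring
  have I2 : (θ₁ - 1 - ρ₁) * ((1 + ρ₂ - θ₂) / (κ₁ + (1 + ρ₂ - θ₂))) +
      κ₂ * (1 - (1 + ρ₂ - θ₂) / (κ₁ + (1 + ρ₂ - θ₂))) = r₁ - ρ₁ := by
    field_simp
    linear_combination key2
  have I3 : κ₁ * ((1 + ρ₂ - θ₂) / (κ₁ + (1 + ρ₂ - θ₂))) +
      (θ₂ - 1 - ρ₂) * (1 - (1 + ρ₂ - θ₂) / (κ₁ + (1 + ρ₂ - θ₂))) = 0 := by
    field_simp; ring
  have I4 : (r₂ - ρ₂ - κ₁) * ((r₂ + 1 - θ₂) / (κ₁ + (1 + ρ₂ - θ₂))) +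
      (r₂ + 1 - θ₂) * (1 - (r₂ + 1 - θ₂) / (κ₁ + (1 + ρ₂ - θ₂))) = 0 := by
    field_simp; ring
  have I5 : (θ₁ - 1 - ρ₁) * ((r₂ + 1 - θ₂) / (κ₁ + (1 + ρ₂ - θ₂))) +
      κ₂ * (1 - (r₂ + 1 - θ₂) / (κ₁ + (1 + ρ₂ - θ₂))) = 0 := by
    field_simp
    linear_combination H2
  have I6 : κ₁ * ((r₂ + 1 - θ₂) / (κ₁ + (1 + ρ₂ - θ₂))) +
      (θ₂ - 1 - ρ₂) * (1 - (r₂ + 1 - θ₂) / (κ₁ + (1 + ρ₂ - θ₂))) = r₂ - ρ₂ := by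
    field_simp; ring
  have hp₁a : 0 < (1 + ρ₂ - θ₂) / (κ₁ + (1 + ρ₂ - θ₂)) := div_pos hσ hP
  have hp₁b : (1 + ρ₂ - θ₂) / (κ₁ + (1 + ρ₂ - θ₂)) < 1 := by
    rw [div_lt_one hP]; linarith
  have hp₂a : 0 < (r₂ + 1 - θ₂) / (κ₁ + (1 + ρ₂ - θ₂)) := div_pos hβ hP
  have hp₂b : (r₂ + 1 - θ₂) / (κ₁ + (1 + ρ₂ - θ₂)) < 1 := by
    rw [div_lt_one hP]; linarith
  -- first AM-GM piece
  have h1 : b₁ * ρ₁ * δ₀ * x ^ (r₁ - ρ₁) ≤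
      lam * (a₁ * ρ₁ * δ₀ * x ^ (θ₁ - 1 - ρ₁) * y ^ κ₁) +
        ((r₂ + 1 - θ₂) / (κ₁ + (1 + ρ₂ - θ₂))) * (a₂ * ρ₂ * x ^ κ₂ * y ^ (θ₂ - 1 - ρ₂)) := by
    have hA : ((1 + ρ₂ - θ₂) / (κ₁ + (1 + ρ₂ - θ₂))) * (b₁ * ρ₁ * δ₀ * T ^ (-κ₁)) =
        lam * (a₁ * ρ₁ * δ₀) := by
      rw [Real.rpow_neg hT.le, hlamdef]
      field_simp
    have hB : (1 - (1 + ρ₂ - θ₂) / (κ₁ + (1 + ρ₂ - θ₂))) * (b₁ * ρ₁ * δ₀ * T ^ (1 + ρ₂ - θ₂)) =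
        ((r₂ + 1 - θ₂) / (κ₁ + (1 + ρ₂ - θ₂))) * (a₂ * ρ₂) := by
      rw [hδdef]
      field_simp
      ring
    calc b₁ * ρ₁ * δ₀ * x ^ (r₁ - ρ₁)
        = (b₁ * ρ₁ * δ₀) * x ^ (r₁ - ρ₁) * y ^ (0:ℝ) := by rw [Real.rpow_zero]; ring
      _ ≤ ((1 + ρ₂ - θ₂) / (κ₁ + (1 + ρ₂ - θ₂))) *
            ((b₁ * ρ₁ * δ₀) * T ^ (-κ₁) * x ^ (θ₁ - 1 - ρ₁) * y ^ κ₁) +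
          (1 - (1 + ρ₂ - θ₂) / (κ₁ + (1 + ρ₂ - θ₂))) *
            ((b₁ * ρ₁ * δ₀) * T ^ (1 + ρ₂ - θ₂) * x ^ κ₂ * y ^ (θ₂ - 1 - ρ₂)) :=
          key_amgm _ _ T x y _ _ _ _ _ _ _ _ hp₁a hp₁b hT hx hy
            (mul_pos (mul_pos hb₁ hρ₁0) hδ₀) I1 I2 I3
      _ = _ := by
          linear_combination (x ^ (θ₁ - 1 - ρ₁) * y ^ κ₁) * hA +
            (x ^ κ₂ * y ^ (θ₂ - 1 - ρ₂)) * hB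
  -- second AM-GM piece
  have hDT : b₂ * ρ₂ * T ^ (r₂ + 1 - θ₂) = a₂ * ρ₂ := by
    rw [hTβ]
    field_simp
  have hTm : T ^ (r₂ - ρ₂ - κ₁) * (T ^ (1 + ρ₂ - θ₂) * T ^ κ₁) = a₂ / b₂ := by
    rw [← Real.rpow_add hT, ← Real.rpow_add hT,
      show r₂ - ρ₂ - κ₁ + (1 + ρ₂ - θ₂ + κ₁) = r₂ + 1 - θ₂ by ring]
    exact hTβ
  have hkey : ((r₂ + 1 - θ₂) / (κ₁ + (1 + ρ₂ - θ₂))) * (b₂ * ρ₂ * T ^ (r₂ - ρ₂ - κ₁)) ≤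
      (1 - lam) * (a₁ * ρ₁ * δ₀) := by
    have hTm' : T ^ (r₂ - ρ₂ - κ₁) = a₂ / (b₂ * (T ^ (1 + ρ₂ - θ₂) * T ^ κ₁)) := by
      rw [eq_div_iff (mul_pos hb₂ (mul_pos hTσ hTκ)).ne']
      rw [eq_div_iff hb₂.ne'] at hTm
      linear_combination hTm
    have h5 : ((r₂ + 1 - θ₂) / (κ₁ + (1 + ρ₂ - θ₂))) * (b₂ * ρ₂ * T ^ (r₂ - ρ₂ - κ₁)) =
        (r₂ + 1 - θ₂) * a₂ * ρ₂ * (κ₁ * b₁) /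
          ((κ₁ + (1 + ρ₂ - θ₂)) * κ₁ * b₁ * (T ^ (1 + ρ₂ - θ₂) * T ^ κ₁)) := by
      rw [hTm']
      field_simp
    have h6 : (1 - lam) * (a₁ * ρ₁ * δ₀) =
        ((κ₁ + (1 + ρ₂ - θ₂)) * a₁ * T ^ κ₁ - (1 + ρ₂ - θ₂) * b₁) * ((r₂ + 1 - θ₂) * a₂ * ρ₂) /
          ((κ₁ + (1 + ρ₂ - θ₂)) * κ₁ * b₁ * (T ^ (1 + ρ₂ - θ₂) * T ^ κ₁)) := by
      rw [hlamdef, hδdef]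
      field_simp
    have h7 : (κ₁ + (1 + ρ₂ - θ₂)) * b₁ ≤ (κ₁ + (1 + ρ₂ - θ₂)) * (a₁ * T ^ κ₁) :=
      mul_le_mul_of_nonneg_left hab1 hP.le
    rw [h5, h6, div_le_div_iff_of_pos_right
      (mul_pos (mul_pos (mul_pos hP hκ₁) hb₁) (mul_pos hTσ hTκ))]
    have h8 : 0 ≤ ((r₂ + 1 - θ₂) * a₂ * ρ₂) *
        ((κ₁ + (1 + ρ₂ - θ₂)) * (a₁ * T ^ κ₁) - (κ₁ + (1 + ρ₂ - θ₂)) * b₁) :=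
      mul_nonneg (mul_pos (mul_pos hβ ha₂) hρ₂0).le (by linarith)
    linarith [h8]
  have h2 : b₂ * ρ₂ * y ^ (r₂ - ρ₂) ≤
      (1 - lam) * (a₁ * ρ₁ * δ₀ * x ^ (θ₁ - 1 - ρ₁) * y ^ κ₁) +
        (1 - (r₂ + 1 - θ₂) / (κ₁ + (1 + ρ₂ - θ₂))) * (a₂ * ρ₂ * x ^ κ₂ * y ^ (θ₂ - 1 - ρ₂)) := by
    calc b₂ * ρ₂ * y ^ (r₂ - ρ₂)
        = (b₂ * ρ₂) * x ^ (0:ℝ) * y ^ (r₂ - ρ₂) := by rw [Real.rpow_zero]; ring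
      _ ≤ ((r₂ + 1 - θ₂) / (κ₁ + (1 + ρ₂ - θ₂))) *
            ((b₂ * ρ₂) * T ^ (r₂ - ρ₂ - κ₁) * x ^ (θ₁ - 1 - ρ₁) * y ^ κ₁) +
          (1 - (r₂ + 1 - θ₂) / (κ₁ + (1 + ρ₂ - θ₂))) *
            ((b₂ * ρ₂) * T ^ (r₂ + 1 - θ₂) * x ^ κ₂ * y ^ (θ₂ - 1 - ρ₂)) :=
          key_amgm _ _ T x y _ _ _ _ _ _ _ _ hp₂a hp₂b hT hx hy
            (mul_pos hb₂ hρ₂0) I4 I5 I6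
      _ ≤ _ := by
          have t1 : ((r₂ + 1 - θ₂) / (κ₁ + (1 + ρ₂ - θ₂))) *
              ((b₂ * ρ₂) * T ^ (r₂ - ρ₂ - κ₁) * x ^ (θ₁ - 1 - ρ₁) * y ^ κ₁) ≤
              (1 - lam) * (a₁ * ρ₁ * δ₀ * x ^ (θ₁ - 1 - ρ₁) * y ^ κ₁) := by
            calc ((r₂ + 1 - θ₂) / (κ₁ + (1 + ρ₂ - θ₂))) *
                ((b₂ * ρ₂) * T ^ (r₂ - ρ₂ - κ₁) * x ^ (θ₁ - 1 - ρ₁) * y ^ κ₁)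
                = (((r₂ + 1 - θ₂) / (κ₁ + (1 + ρ₂ - θ₂))) * (b₂ * ρ₂ * T ^ (r₂ - ρ₂ - κ₁))) *
                  (x ^ (θ₁ - 1 - ρ₁) * y ^ κ₁) := by ring
              _ ≤ ((1 - lam) * (a₁ * ρ₁ * δ₀)) * (x ^ (θ₁ - 1 - ρ₁) * y ^ κ₁) :=
                  mul_le_mul_of_nonneg_right hkey (by positivity)
              _ = (1 - lam) * (a₁ * ρ₁ * δ₀ * x ^ (θ₁ - 1 - ρ₁) * y ^ κ₁) := by ring
          have t2 : (1 - (r₂ + 1 - θ₂) / (κ₁ + (1 + ρ₂ - θ₂))) *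
              ((b₂ * ρ₂) * T ^ (r₂ + 1 - θ₂) * x ^ κ₂ * y ^ (θ₂ - 1 - ρ₂)) =
              (1 - (r₂ + 1 - θ₂) / (κ₁ + (1 + ρ₂ - θ₂))) *
              (a₂ * ρ₂ * x ^ κ₂ * y ^ (θ₂ - 1 - ρ₂)) := by
            linear_combination ((1 - (r₂ + 1 - θ₂) / (κ₁ + (1 + ρ₂ - θ₂))) *
              (x ^ κ₂ * y ^ (θ₂ - 1 - ρ₂))) * hDT
          linarith
  calc b₁ * ρ₁ * δ₀ * x ^ (r₁ - ρ₁) + b₂ * ρ₂ * y ^ (r₂ - ρ₂)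
      ≤ (lam * (a₁ * ρ₁ * δ₀ * x ^ (θ₁ - 1 - ρ₁) * y ^ κ₁) +
          ((r₂ + 1 - θ₂) / (κ₁ + (1 + ρ₂ - θ₂))) * (a₂ * ρ₂ * x ^ κ₂ * y ^ (θ₂ - 1 - ρ₂))) +
        ((1 - lam) * (a₁ * ρ₁ * δ₀ * x ^ (θ₁ - 1 - ρ₁) * y ^ κ₁) +
          (1 - (r₂ + 1 - θ₂) / (κ₁ + (1 + ρ₂ - θ₂))) * (a₂ * ρ₂ * x ^ κ₂ * y ^ (θ₂ - 1 - ρ₂))) :=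
        add_le_add h1 h2
    _ = a₁ * ρ₁ * δ₀ * x ^ (θ₁ - 1 - ρ₁) * y ^ κ₁ + a₂ * ρ₂ * x ^ κ₂ * y ^ (θ₂ - 1 - ρ₂) := by
        ring
end

section
/- Let a₁, a₂, b₁, b₂ > 0, θ ≥ 0 and κ > 0 with θ + κ < 1, and suppose a₁ a₂ ≥ b₁ b₂. Then there exists a constant δ₀ > 0 such that δ₀ a₁ y^{1+κ−θ} + a₂ x^{1+κ−θ} ≥ δ₀ b₁ x^{κ} y^{1−θ} + b₂ y^{κ} x^{1−θ} for all x, y > 0. -/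
open Real

theorem lemma_t5_1 (a₁ a₂ b₁ b₂ θ κ : ℝ)
    (ha₁ : 0 < a₁) (ha₂ : 0 < a₂) (hb₁ : 0 < b₁) (hb₂ : 0 < b₂)
    (hθ : 0 ≤ θ) (hκ : 0 < κ) (hθκ : θ + κ < 1)
    (hab : a₁ * a₂ ≥ b₁ * b₂) :
    ∃ δ₀ : ℝ, 0 < δ₀ ∧ ∀ x y : ℝ, 0 < x → 0 < y →
      δ₀ * a₁ * y ^ (1 + κ - θ) + a₂ * x ^ (1 + κ - θ) ≥
        δ₀ * b₁ * x ^ κ * y ^ (1 - θ) + b₂ * y ^ κ * x ^ (1 - θ) := by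
  have h1θ : 0 < 1 - θ := by linarith
  obtain ⟨d, hd, hda⟩ : ∃ d : ℝ, 0 < d ∧ d * a₁ = b₂ :=
    ⟨b₂ / a₁, by positivity, div_mul_cancel₀ _ ha₁.ne'⟩
  obtain ⟨c, hcpos, hck⟩ : ∃ c : ℝ, 0 < c ∧ c ^ κ * b₁ = a₁ :=
    ⟨(a₁ / b₁) ^ κ⁻¹, Real.rpow_pos_of_pos (by positivity) _, by
      rw [Real.rpow_inv_rpow (by positivity) hκ.ne', div_mul_cancel₀ _ hb₁.ne']⟩
  have hdb : d * b₁ ≤ a₂ := by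
    have h1 : d * b₁ * a₁ = b₁ * b₂ := by rw [← hda]; ring
    have h2 : d * b₁ * a₁ ≤ a₂ * a₁ := by rw [h1]; nlinarith
    exact le_of_mul_le_mul_right h2 ha₁
  have hcθ : (0:ℝ) < c ^ (1 - θ) := Real.rpow_pos_of_pos hcpos _
  refine ⟨d * c ^ (1 - θ), by positivity, ?_⟩
  intro x y hx hy
  have hxκ : (0:ℝ) < x ^ κ := Real.rpow_pos_of_pos hx _
  have hyκ : (0:ℝ) < y ^ κ := Real.rpow_pos_of_pos hy _
  have hxθ : (0:ℝ) < x ^ (1 - θ) := Real.rpow_pos_of_pos hx _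
  have hyθ : (0:ℝ) < y ^ (1 - θ) := Real.rpow_pos_of_pos hy _
  have hxs : x ^ (1 + κ - θ) = x ^ (1 - θ) * x ^ κ := by
    rw [← Real.rpow_add hx]; ring_nf
  have hys : y ^ (1 + κ - θ) = y ^ (1 - θ) * y ^ κ := by
    rw [← Real.rpow_add hy]; ring_nf
  have key : 0 ≤ ((d * c ^ (1 - θ)) * y ^ (1 - θ) - d * x ^ (1 - θ)) *
      (a₁ * y ^ κ - b₁ * x ^ κ) := by
    have heq : b₁ * (c ^ κ * y ^ κ) = a₁ * y ^ κ := by linear_combination y ^ κ * hck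
    rcases le_total x (c * y) with h | h
    · have h1 : x ^ (1 - θ) ≤ (c * y) ^ (1 - θ) :=
        Real.rpow_le_rpow hx.le h h1θ.le
      have h2 : x ^ κ ≤ (c * y) ^ κ := Real.rpow_le_rpow hx.le h hκ.le
      rw [Real.mul_rpow hcpos.le hy.le] at h1 h2
      apply mul_nonneg
      · have := mul_le_mul_of_nonneg_left h1 hd.le
        linarith
      · have := mul_le_mul_of_nonneg_left h2 hb₁.le
        linarith
    · have h1 : (c * y) ^ (1 - θ) ≤ x ^ (1 - θ) :=
        Real.rpow_le_rpow (by positivity) h h1θ.le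
      have h2 : (c * y) ^ κ ≤ x ^ κ := Real.rpow_le_rpow (by positivity) h hκ.le
      rw [Real.mul_rpow hcpos.le hy.le] at h1 h2
      have hA : (d * c ^ (1 - θ)) * y ^ (1 - θ) - d * x ^ (1 - θ) ≤ 0 := by
        have := mul_le_mul_of_nonneg_left h1 hd.le
        linarith
      have hB : a₁ * y ^ κ - b₁ * x ^ κ ≤ 0 := by
        have := mul_le_mul_of_nonneg_left h2 hb₁.le
        linarith
      nlinarith [mul_nonneg (neg_nonneg.2 hA) (neg_nonneg.2 hB)]
  have key2 : (d * c ^ (1 - θ)) * b₁ * x ^ κ * y ^ (1 - θ) + d * a₁ * (y ^ κ * x ^ (1 - θ)) ≤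
      (d * c ^ (1 - θ)) * a₁ * (y ^ (1 - θ) * y ^ κ) + d * b₁ * (x ^ (1 - θ) * x ^ κ) := by
    nlinarith [key]
  have h3 : d * b₁ * (x ^ (1 - θ) * x ^ κ) ≤ a₂ * (x ^ (1 - θ) * x ^ κ) :=
    mul_le_mul_of_nonneg_right hdb (mul_pos hxθ hxκ).le
  rw [ge_iff_le, hxs, hys, ← hda]
  nlinarith [key2, h3]
end

section
/- Let a₁, a₂, b₁, b₂, κ₁, κ₂ > 0, θ₁, θ₂ ≥ 0, and let r₁, r₂ be real numbers with θ₁ − 1 < r₁ < 0 and θ₂ − 1 < r₂ < 0. Let ε₀ ∈ (0,1), ρ₁, ρ₂ > 1, 0 < ρ < min(1/ρ₁, 1/ρ₂), and set b̃ᵢ := (1 − ε₀)(1 − ρᵢ ρ) bᵢ for i = 1,2. Assume (a₁/((1−ε₀)b₁))^{1/(r₁+1−θ₁)} · (a₂/((1−ε₀)b₂))^{1/κ₂} < 1, that (a₁/b̃₁)^{1/(r₁+1−θ₁)} · (a₂/b̃₂)^{1/κ₂} < 1, and that (r₁ + 1 − θ₁)/κ₁ = (r₁ + ρ₁)/(r₂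 + ρ₂) = κ₂/(r₂ + 1 − θ₂). Then there exists δ₀ > 0 such that δ₀ b̃₁ ρ₁ x^{r₁+ρ₁} + b̃₂ ρ₂ y^{r₂+ρ₂} > δ₀ a₁ ρ₁ x^{θ₁+ρ₁−1} y^{κ₁} + a₂ ρ₂ y^{θ₂+ρ₂−1} x^{κ₂} for all x, y > 0. -/
open Real

/-!
With `X = x ^ (r₁ + ρ₁)` and `Y = y ^ (r₂ + ρ₂)`, the exponent relations say that the two monomials on
the right are weighted geometric means `X ^ u * Y ^ (1 - u)` and `X ^ w * Y ^ (1 - w)`: their exponent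
vectors lie on the segment from `(r₁ + ρ₁, 0)` to `(0, r₂ + ρ₂)`. After rescaling `X` by a suitable
`E`, weighted AM–GM bounds each of them by a convex combination of `E * X` and `Y`. `E` makes the
first bound an identity, and the product condition is exactly what makes the second one strict;
`δ₀` is then read off by matching the coefficients of `X`.
-/
theorem exists_pos_weighted_geom_means_lt_linear {u w A B P Q : ℝ}
    (hu₀ : 0 ≤ u) (hu₁ : u < 1) (hw₀ : 0 < w) (hw₁ : w ≤ 1)
    (hA : 0 < A) (hB : 0 ≤ B) (hP : 0 < P) (hQ : 0 < Q)
    (h : (A / P) ^ (1 / (1 - u)) * (B / Q) ^ (1 / w) < 1) :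
    ∃ δ > 0, ∀ X Y : ℝ, 0 < X → 0 < Y →
      δ * A * X ^ u * Y ^ (1 - u) + B * X ^ w * Y ^ (1 - w) < δ * P * X + Q * Y := by
  have hu : 0 < 1 - u := by linarith
  set E := (P / A) ^ (1 / (1 - u)) with hE_def
  have hE : 0 < E := by positivity
  have hE_pow : E ^ (1 - u) = P / A := by
    rw [hE_def, ← rpow_mul (by positivity), one_div_mul_cancel hu.ne', rpow_one]
  have hEA : E * A / P = E ^ u := by
    have hsplit : E = E ^ u * E ^ (1 - u) := by rw [← rpow_add hE, add_sub_cancel, rpow_one]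
    rw [hE_pow] at hsplit
    nth_rewrite 1 [hsplit]
    field_simp
  have hBE : B / Q < E ^ w := by
    rw [← inv_div P A, inv_rpow (by positivity), ← hE_def] at h
    have hlt : (B / Q) ^ w⁻¹ < E := by
      rw [← one_div]
      rwa [inv_mul_lt_iff₀ hE, mul_one] at h
    simpa [rpow_inv_rpow (div_nonneg hB hQ.le) hw₀.ne'] using
      rpow_lt_rpow (by positivity) hlt hw₀
  set c := w * Q / (1 - u)
  refine ⟨c * E / P, by positivity, fun X Y hX hY => ?_⟩
  have hEX (v : ℝ) : (E * X) ^ v = E ^ v * X ^ v := mul_rpow hE.le hX.le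
  have hbound_u : c * E / P * A * X ^ u * Y ^ (1 - u) ≤ c * (u * (E * X) + (1 - u) * Y) := by
    calc c * E / P * A * X ^ u * Y ^ (1 - u) = c * ((E * X) ^ u * Y ^ (1 - u)) := by
          rw [hEX, ← hEA]; ring
      _ ≤ c * (u * (E * X) + (1 - u) * Y) := by
          gcongr
          exact geom_mean_le_arith_mean2_weighted hu₀ hu.le (by positivity) hY.le (by ring)
  have hbound_w : B * X ^ w * Y ^ (1 - w) < Q * (w * (E * X) + (1 - w) * Y) := by
    calc B * X ^ w * Y ^ (1 - w) < E ^ w * Q * X ^ w * Y ^ (1 - w) := by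
          gcongr
          exact (div_lt_iff₀ hQ).mp hBE
      _ = Q * ((E * X) ^ w * Y ^ (1 - w)) := by rw [hEX]; ring
      _ ≤ Q * (w * (E * X) + (1 - w) * Y) := by
          gcongr
          exact geom_mean_le_arith_mean2_weighted hw₀.le (by linarith) (by positivity) hY.le
            (by ring)
  have hc : c * (1 - u) = w * Q := div_mul_cancel₀ _ hu.ne'
  calc c * E / P * A * X ^ u * Y ^ (1 - u) + B * X ^ w * Y ^ (1 - w)
      < c * (u * (E * X) + (1 - u) * Y) + Q * (w * (E * X) + (1 - w) * Y) := by linarith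
    _ = c * E / P * P * X + Q * Y := by
        field_simp
        linear_combination (Y - E * X) * hc

theorem exists_pos_monomials_lt_of_mem_segment {s₁ s₂ m₁ n₁ m₂ n₂ A B P Q : ℝ}
    (hs₁ : 0 < s₁) (hs₂ : 0 < s₂) (hm₁ : 0 ≤ m₁) (hn₁ : 0 < n₁) (hm₂ : 0 < m₂) (hn₂ : 0 ≤ n₂)
    (h₁ : m₁ / s₁ + n₁ / s₂ = 1) (h₂ : m₂ / s₁ + n₂ / s₂ = 1)
    (hA : 0 < A) (hB : 0 ≤ B) (hP : 0 < P) (hQ : 0 < Q)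
    (h : (A / P) ^ (s₂ / n₁) * (B / Q) ^ (s₁ / m₂) < 1) :
    ∃ δ > 0, ∀ x y : ℝ, 0 < x → 0 < y →
      δ * A * x ^ m₁ * y ^ n₁ + B * x ^ m₂ * y ^ n₂ < δ * P * x ^ s₁ + Q * y ^ s₂ := by
  have hu : 1 - m₁ / s₁ = n₁ / s₂ := by linarith
  have hw : 1 - m₂ / s₁ = n₂ / s₂ := by linarith
  obtain ⟨δ, hδ, hlt⟩ := exists_pos_weighted_geom_means_lt_linear (div_nonneg hm₁ hs₁.le)
    (by linarith [div_pos hn₁ hs₂]) (div_pos hm₂ hs₁) (by linarith [div_nonneg hn₂ hs₂.le])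
    hA hB hP hQ (by rwa [hu, one_div_div, one_div_div])
  refine ⟨δ, hδ, fun x y hx hy => ?_⟩
  simpa only [hu, hw, ← rpow_mul hx.le, ← rpow_mul hy.le, mul_div_cancel₀ _ hs₁.ne',
    mul_div_cancel₀ _ hs₂.ne'] using hlt (x ^ s₁) (y ^ s₂) (by positivity) (by positivity)

theorem lemma_t5_2_general (a₁ a₂ b₁ b₂ κ₁ κ₂ θ₁ θ₂ r₁ r₂ ε₀ ρ₁ ρ₂ ρ : ℝ)
    (ha₁ : 0 < a₁) (ha₂ : 0 < a₂) (hb₁ : 0 < b₁) (hb₂ : 0 < b₂)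
    (hκ₁ : 0 < κ₁) (hκ₂ : 0 < κ₂) (hθ₁ : 0 ≤ θ₁) (hθ₂ : 0 ≤ θ₂)
    (hr₁l : θ₁ - 1 < r₁) (hr₂l : θ₂ - 1 < r₂)
    (hε₀' : ε₀ < 1)
    (hρ₁ : 1 < ρ₁) (hρ₂ : 1 < ρ₂) (hρ' : ρ < min (1 / ρ₁) (1 / ρ₂))
    (h2 : (a₁ / ((1 - ε₀) * (1 - ρ₁ * ρ) * b₁)) ^ (1 / (r₁ + 1 - θ₁)) *
            (a₂ / ((1 - ε₀) * (1 - ρ₂ * ρ) * b₂)) ^ (1 / κ₂) < 1)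
    (heq₁ : (r₁ + 1 - θ₁) / κ₁ = (r₁ + ρ₁) / (r₂ + ρ₂))
    (heq₂ : (r₁ + ρ₁) / (r₂ + ρ₂) = κ₂ / (r₂ + 1 - θ₂)) :
    ∃ δ₀ : ℝ, 0 < δ₀ ∧ ∀ x y : ℝ, 0 < x → 0 < y →
      δ₀ * ((1 - ε₀) * (1 - ρ₁ * ρ) * b₁) * ρ₁ * x ^ (r₁ + ρ₁) +
          ((1 - ε₀) * (1 - ρ₂ * ρ) * b₂) * ρ₂ * y ^ (r₂ + ρ₂) >
        δ₀ * a₁ * ρ₁ * x ^ (θ₁ + ρ₁ - 1) * y ^ κ₁ +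
          a₂ * ρ₂ * y ^ (θ₂ + ρ₂ - 1) * x ^ κ₂  := by
  obtain ⟨hρρ₁, hρρ₂⟩ := lt_min_iff.mp hρ'
  rw [lt_div_iff₀ (by linarith)] at hρρ₁ hρρ₂
  set B₁ := (1 - ε₀) * (1 - ρ₁ * ρ) * b₁
  set B₂ := (1 - ε₀) * (1 - ρ₂ * ρ) * b₂
  have hB₁ : 0 < B₁ := mul_pos (mul_pos (by linarith) (by linarith)) hb₁
  have hB₂ : 0 < B₂ := mul_pos (mul_pos (by linarith) (by linarith)) hb₂
  have hs₁ : 0 < r₁ + ρ₁ := by linarith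
  have hs₂ : 0 < r₂ + ρ₂ := by linarith
  rw [div_eq_div_iff hκ₁.ne' hs₂.ne'] at heq₁
  rw [div_eq_div_iff hs₂.ne' (by linarith)] at heq₂
  have hseg₁ : (θ₁ + ρ₁ - 1) / (r₁ + ρ₁) + κ₁ / (r₂ + ρ₂) = 1 := by field_simp; linarith
  have hseg₂ : κ₂ / (r₁ + ρ₁) + (θ₂ + ρ₂ - 1) / (r₂ + ρ₂) = 1 := by field_simp; linarith
  have hcond : (a₁ * ρ₁ / (B₁ * ρ₁)) ^ ((r₂ + ρ₂) / κ₁) *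
      (a₂ * ρ₂ / (B₂ * ρ₂)) ^ ((r₁ + ρ₁) / κ₂) < 1 := by
    have hexp : 1 / (r₁ + 1 - θ₁) * (r₁ + ρ₁) = (r₂ + ρ₂) / κ₁ := by
      rw [one_div_mul_eq_div, div_eq_div_iff (by linarith) hκ₁.ne']
      linarith
    rw [mul_div_mul_right _ _ (by linarith), mul_div_mul_right _ _ (by linarith), ← hexp,
      ← one_div_mul_eq_div κ₂, rpow_mul (by positivity), rpow_mul (by positivity),
      ← mul_rpow (by positivity) (by positivity)]
    exact rpow_lt_one (by positivity) h2 hs₁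
  obtain ⟨δ₀, hδ₀, hlt⟩ := exists_pos_monomials_lt_of_mem_segment hs₁ hs₂ (by linarith) hκ₁ hκ₂
    (by linarith) hseg₁ hseg₂ (by positivity) (by positivity) (by positivity) (by positivity) hcond
  refine ⟨δ₀, hδ₀, fun x y hx hy => ?_⟩
  linarith [hlt x y hx hy]

theorem lemma_t5_2 (a₁ a₂ b₁ b₂ κ₁ κ₂ θ₁ θ₂ r₁ r₂ ε₀ ρ₁ ρ₂ ρ : ℝ)
    (ha₁ : 0 < a₁) (ha₂ : 0 < a₂) (hb₁ : 0 < b₁) (hb₂ : 0 < b₂)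
    (hκ₁ : 0 < κ₁) (hκ₂ : 0 < κ₂) (hθ₁ : 0 ≤ θ₁) (hθ₂ : 0 ≤ θ₂)
    (hr₁l : θ₁ - 1 < r₁) (hr₁u : r₁ < 0) (hr₂l : θ₂ - 1 < r₂) (hr₂u : r₂ < 0)
    (hε₀ : 0 < ε₀) (hε₀' : ε₀ < 1)
    (hρ₁ : 1 < ρ₁) (hρ₂ : 1 < ρ₂) (hρ : 0 < ρ) (hρ' : ρ < min (1 / ρ₁) (1 / ρ₂))
    (h1 : (a₁ / ((1 - ε₀) * b₁)) ^ (1 / (r₁ + 1 - θ₁)) *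
            (a₂ / ((1 - ε₀) * b₂)) ^ (1 / κ₂) < 1)
    (h2 : (a₁ / ((1 - ε₀) * (1 - ρ₁ * ρ) * b₁)) ^ (1 / (r₁ + 1 - θ₁)) *
            (a₂ / ((1 - ε₀) * (1 - ρ₂ * ρ) * b₂)) ^ (1 / κ₂) < 1)
    (heq₁ : (r₁ + 1 - θ₁) / κ₁ = (r₁ + ρ₁) / (r₂ + ρ₂))
    (heq₂ : (r₁ + ρ₁) / (r₂ + ρ₂) = κ₂ / (r₂ + 1 - θ₂)) :
    ∃ δ₀ : ℝ, 0 < δ₀ ∧ ∀ x y : ℝ, 0 < x → 0 < y →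
      δ₀ * ((1 - ε₀) * (1 - ρ₁ * ρ) * b₁) * ρ₁ * x ^ (r₁ + ρ₁) +
          ((1 - ε₀) * (1 - ρ₂ * ρ) * b₂) * ρ₂ * y ^ (r₂ + ρ₂) >
        δ₀ * a₁ * ρ₁ * x ^ (θ₁ + ρ₁ - 1) * y ^ κ₁ +
          a₂ * ρ₂ * y ^ (θ₂ + ρ₂ - 1) * x ^ κ₂ :=
  lemma_t5_2_general a₁ a₂ b₁ b₂ κ₁ κ₂ θ₁ θ₂ r₁ r₂ ε₀ ρ₁ ρ₂ ρ ha₁ ha₂ hb₁ hb₂ hκ₁ hκ₂ hθ₁ hθ₂ hr₁l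
    hr₂l hε₀' hρ₁ hρ₂ hρ' h2 heq₁ heq₂
end

section
/- Let κ₁, κ₂ > 0, θ₁, θ₂ ≥ 0, let r₁, r₂ be real numbers with θ₁ − 1 < r₁ < 0 and θ₂ − 1 < r₂ < 0, and let ρ₁, ρ₂ ≥ 1 satisfy (r₁ + 1 − θ₁)/κ₁ < (r₁ + ρ₁)/(r₂ + ρ₂) < κ₂/(r₂ + 1 − θ₂). Then for any constants c₁, c₂, c₃, c₄ > 0 there exists a constant c ∈ (0,1) such that c₁ x^{r₁+ρ₁} + c₂ y^{r₂+ρ₂} ≥ c₃ x^{θ₁−1+ρ₁} y^{κ₁} + c₄ y^{θ₂−1+ρ₂} x^{κ₂} for all 0 < x, y ≤ c. -/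
set_option maxHeartbeats 1000000


open Real

lemma key_aux (a b s κ : ℝ) (ha : 0 < a) (hb : 0 < b) (hs : 0 < s) (hsa : s ≤ a)
    (h : s / a < κ / b) :
    ∃ δ : ℝ, 0 < δ ∧ ∀ x y : ℝ, 0 < x → x ≤ 1 → 0 < y → y ≤ 1 →
      x ^ (a - s) * y ^ κ ≤ y ^ δ * (x ^ a + y ^ b) := by
  set lam : ℝ := min ((s / a + κ / b) / 2) 1 with hlam
  have hsapos : 0 < s / a := div_pos hs ha
  have hκb : 0 < κ / b := lt_trans hsapos h
  have hlampos : 0 < lam := lt_min (by linarith) one_pos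
  have hlam_le1 : lam ≤ 1 := min_le_right _ _
  have hlam_ge : s / a ≤ lam := by
    apply le_min
    · linarith
    · exact (div_le_one ha).mpr hsa
  have hlam_lt : lam < κ / b := lt_of_le_of_lt (min_le_left _ _) (by linarith)
  refine ⟨κ - b * lam, by
    have : b * lam < b * (κ / b) := by exact (mul_lt_mul_iff_right₀ hb).mpr hlam_lt
    rw [mul_div_cancel₀ _ hb.ne'] at this
    linarith, ?_⟩
  intro x y hx hx1 hy hy1
  have h1 : x ^ (a - s) ≤ x ^ (a * (1 - lam)) := by
    apply Real.rpow_le_rpow_of_exponent_ge hx hx1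
    nlinarith [ (div_le_iff₀ ha).mp hlam_ge ]
  have h2 : y ^ κ = y ^ (b * lam) * y ^ (κ - b * lam) := by
    rw [← Real.rpow_add hy]; ring_nf
  have h3 : x ^ (a * (1 - lam)) * y ^ (b * lam) ≤ x ^ a + y ^ b := by
    have hxa : (0:ℝ) ≤ x ^ a := (Real.rpow_pos_of_pos hx a).le
    have hyb : (0:ℝ) ≤ y ^ b := (Real.rpow_pos_of_pos hy b).le
    have e1 : x ^ (a * (1 - lam)) = (x ^ a) ^ (1 - lam) := by
      rw [← Real.rpow_mul hx.le]
    have e2 : y ^ (b * lam) = (y ^ b) ^ lam := by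
      rw [← Real.rpow_mul hy.le]
    rcases le_total (x ^ a) (y ^ b) with hc | hc
    · calc x ^ (a * (1 - lam)) * y ^ (b * lam)
          ≤ (y ^ b) ^ (1 - lam) * (y ^ b) ^ lam := by
            rw [e1, e2]
            exact mul_le_mul_of_nonneg_right
              (Real.rpow_le_rpow hxa hc (by linarith)) (Real.rpow_nonneg hyb lam)
        _ = y ^ b := by rw [← Real.rpow_add (Real.rpow_pos_of_pos hy b)]; ring_nf; rw [Real.rpow_one]
        _ ≤ x ^ a + y ^ b := by linarith
    · calc x ^ (a * (1 - lam)) * y ^ (b * lam)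
          ≤ (x ^ a) ^ (1 - lam) * (x ^ a) ^ lam := by
            rw [e1, e2]
            exact mul_le_mul_of_nonneg_left
              (Real.rpow_le_rpow hyb hc hlampos.le) (Real.rpow_nonneg hxa _)
        _ = x ^ a := by rw [← Real.rpow_add (Real.rpow_pos_of_pos hx a)]; ring_nf; rw [Real.rpow_one]
        _ ≤ x ^ a + y ^ b := by linarith
  calc x ^ (a - s) * y ^ κ
      = x ^ (a - s) * y ^ (b * lam) * y ^ (κ - b * lam) := by rw [h2]; ring
    _ ≤ x ^ (a * (1 - lam)) * y ^ (b * lam) * y ^ (κ - b * lam) := by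
        apply mul_le_mul_of_nonneg_right
        · exact mul_le_mul_of_nonneg_right h1 (Real.rpow_pos_of_pos hy _).le
        · exact (Real.rpow_pos_of_pos hy _).le
    _ ≤ (x ^ a + y ^ b) * y ^ (κ - b * lam) := by
        exact mul_le_mul_of_nonneg_right h3 (Real.rpow_pos_of_pos hy _).le
    _ = y ^ (κ - b * lam) * (x ^ a + y ^ b) := by ring

theorem lemma_t7_1 (κ₁ κ₂ θ₁ θ₂ r₁ r₂ ρ₁ ρ₂ : ℝ)
    (hκ₁ : 0 < κ₁) (hκ₂ : 0 < κ₂) (hθ₁ : 0 ≤ θ₁) (hθ₂ : 0 ≤ θ₂)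
    (hr₁l : θ₁ - 1 < r₁) (hr₁u : r₁ < 0) (hr₂l : θ₂ - 1 < r₂) (hr₂u : r₂ < 0)
    (hρ₁ : 1 ≤ ρ₁) (hρ₂ : 1 ≤ ρ₂)
    (h1 : (r₁ + 1 - θ₁) / κ₁ < (r₁ + ρ₁) / (r₂ + ρ₂))
    (h2 : (r₁ + ρ₁) / (r₂ + ρ₂) < κ₂ / (r₂ + 1 - θ₂)) :
    ∀ c₁ c₂ c₃ c₄ : ℝ, 0 < c₁ → 0 < c₂ → 0 < c₃ → 0 < c₄ →
      ∃ c : ℝ, 0 < c ∧ c < 1 ∧ ∀ x y : ℝ, 0 < x → x ≤ c → 0 < y → y ≤ c →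
        c₁ * x ^ (r₁ + ρ₁) + c₂ * y ^ (r₂ + ρ₂) ≥
          c₃ * x ^ (θ₁ - 1 + ρ₁) * y ^ κ₁ + c₄ * y ^ (θ₂ - 1 + ρ₂) * x ^ κ₂ := by
  intro c₁ c₂ c₃ c₄ hc₁ hc₂ hc₃ hc₄
  set a : ℝ := r₁ + ρ₁ with ha_def
  set b : ℝ := r₂ + ρ₂ with hb_def
  set s₁ : ℝ := r₁ + 1 - θ₁ with hs₁_def
  set s₂ : ℝ := r₂ + 1 - θ₂ with hs₂_def
  have ha : 0 < a := by simp only [ha_def]; linarith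
  have hb : 0 < b := by simp only [hb_def]; linarith
  have hs₁ : 0 < s₁ := by simp only [hs₁_def]; linarith
  have hs₂ : 0 < s₂ := by simp only [hs₂_def]; linarith
  have hs₁a : s₁ ≤ a := by simp only [hs₁_def, ha_def]; linarith
  have hs₂b : s₂ ≤ b := by simp only [hs₂_def, hb_def]; linarith
  -- translate h1 : s₁/κ₁ < a/b  into  s₁/a < κ₁/b
  have h1' : s₁ / a < κ₁ / b := by
    rw [div_lt_div_iff₀ ha hb]
    have h := (div_lt_div_iff₀ hκ₁ hb).mp h1
    linear_combination h
  have h2' : s₂ / b < κ₂ / a := by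
    rw [div_lt_div_iff₀ hb ha]
    have h := (div_lt_div_iff₀ hb hs₂).mp h2
    linear_combination h
  obtain ⟨δ₁, hδ₁, H₁⟩ := key_aux a b s₁ κ₁ ha hb hs₁ hs₁a h1'
  obtain ⟨δ₂, hδ₂, H₂⟩ := key_aux b a s₂ κ₂ hb ha hs₂ hs₂b h2'
  set m : ℝ := min c₁ c₂ with hm_def
  have hm : 0 < m := lt_min hc₁ hc₂
  set t₁ : ℝ := (m / (2 * c₃)) ^ δ₁⁻¹ with ht₁_def
  set t₂ : ℝ := (m / (2 * c₄)) ^ δ₂⁻¹ with ht₂_def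
  have ht₁ : 0 < t₁ := Real.rpow_pos_of_pos (div_pos hm (by linarith)) _
  have ht₂ : 0 < t₂ := Real.rpow_pos_of_pos (div_pos hm (by linarith)) _
  refine ⟨min (1/2) (min t₁ t₂), lt_min (by norm_num) (lt_min ht₁ ht₂),
    lt_of_le_of_lt (min_le_left _ _) (by norm_num), ?_⟩
  intro x y hx hxc hy hyc
  set c : ℝ := min (1/2) (min t₁ t₂) with hc_def
  have hcpos : 0 < c := lt_min (by norm_num) (lt_min ht₁ ht₂)
  have hc1 : c ≤ 1 := le_trans (min_le_left _ _) (by norm_num)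
  have hx1 : x ≤ 1 := le_trans hxc hc1
  have hy1 : y ≤ 1 := le_trans hyc hc1
  have hxa : 0 < x ^ a := Real.rpow_pos_of_pos hx a
  have hyb : 0 < y ^ b := Real.rpow_pos_of_pos hy b
  -- c^δ₁ ≤ m/(2c₃)
  have hcd₁ : c ^ δ₁ ≤ m / (2 * c₃) := by
    calc c ^ δ₁ ≤ t₁ ^ δ₁ :=
          Real.rpow_le_rpow hcpos.le (le_trans (min_le_right _ _) (min_le_left _ _)) hδ₁.le
      _ = m / (2 * c₃) := Real.rpow_inv_rpow (div_pos hm (by linarith)).le hδ₁.ne'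
  have hcd₂ : c ^ δ₂ ≤ m / (2 * c₄) := by
    calc c ^ δ₂ ≤ t₂ ^ δ₂ :=
          Real.rpow_le_rpow hcpos.le (le_trans (min_le_right _ _) (min_le_right _ _)) hδ₂.le
      _ = m / (2 * c₄) := Real.rpow_inv_rpow (div_pos hm (by linarith)).le hδ₂.ne'
  have hyd : y ^ δ₁ ≤ m / (2 * c₃) :=
    le_trans (Real.rpow_le_rpow hy.le hyc hδ₁.le) hcd₁
  have hxd : x ^ δ₂ ≤ m / (2 * c₄) :=
    le_trans (Real.rpow_le_rpow hx.le hxc hδ₂.le) hcd₂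
  have e₁ : θ₁ - 1 + ρ₁ = a - s₁ := by simp only [ha_def, hs₁_def]; ring
  have e₂ : θ₂ - 1 + ρ₂ = b - s₂ := by simp only [hb_def, hs₂_def]; ring
  have T₁ : c₃ * x ^ (θ₁ - 1 + ρ₁) * y ^ κ₁ ≤ (m / 2) * (x ^ a + y ^ b) := by
    rw [e₁]
    have := H₁ x y hx hx1 hy hy1
    have h' : c₃ * (x ^ (a - s₁) * y ^ κ₁) ≤ c₃ * (y ^ δ₁ * (x ^ a + y ^ b)) :=
      mul_le_mul_of_nonneg_left this hc₃.le
    have h'' : c₃ * (y ^ δ₁ * (x ^ a + y ^ b)) ≤ c₃ * ((m / (2 * c₃)) * (x ^ a + y ^ b)) := by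
      apply mul_le_mul_of_nonneg_left _ hc₃.le
      exact mul_le_mul_of_nonneg_right hyd (by positivity)
    have heq : c₃ * ((m / (2 * c₃)) * (x ^ a + y ^ b)) = (m / 2) * (x ^ a + y ^ b) := by
      field_simp
    calc c₃ * x ^ (a - s₁) * y ^ κ₁ = c₃ * (x ^ (a - s₁) * y ^ κ₁) := by ring
      _ ≤ c₃ * (y ^ δ₁ * (x ^ a + y ^ b)) := h'
      _ ≤ c₃ * ((m / (2 * c₃)) * (x ^ a + y ^ b)) := h''
      _ = (m / 2) * (x ^ a + y ^ b) := heq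
  have T₂ : c₄ * y ^ (θ₂ - 1 + ρ₂) * x ^ κ₂ ≤ (m / 2) * (x ^ a + y ^ b) := by
    rw [e₂]
    have := H₂ y x hy hy1 hx hx1
    have h' : c₄ * (y ^ (b - s₂) * x ^ κ₂) ≤ c₄ * (x ^ δ₂ * (y ^ b + x ^ a)) :=
      mul_le_mul_of_nonneg_left this hc₄.le
    have h'' : c₄ * (x ^ δ₂ * (y ^ b + x ^ a)) ≤ c₄ * ((m / (2 * c₄)) * (y ^ b + x ^ a)) := by
      apply mul_le_mul_of_nonneg_left _ hc₄.le
      exact mul_le_mul_of_nonneg_right hxd (by positivity)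
    have heq : c₄ * ((m / (2 * c₄)) * (y ^ b + x ^ a)) = (m / 2) * (x ^ a + y ^ b) := by
      field_simp; ring
    calc c₄ * y ^ (b - s₂) * x ^ κ₂ = c₄ * (y ^ (b - s₂) * x ^ κ₂) := by ring
      _ ≤ c₄ * (x ^ δ₂ * (y ^ b + x ^ a)) := h'
      _ ≤ c₄ * ((m / (2 * c₄)) * (y ^ b + x ^ a)) := h''
      _ = (m / 2) * (x ^ a + y ^ b) := heq
  have hma : m ≤ c₁ := min_le_left _ _
  have hmb : m ≤ c₂ := min_le_right _ _
  have : c₃ * x ^ (θ₁ - 1 + ρ₁) * y ^ κ₁ + c₄ * y ^ (θ₂ - 1 + ρ₂) * x ^ κ₂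
      ≤ m * (x ^ a + y ^ b) := by linarith
  have hfin : m * (x ^ a + y ^ b) ≤ c₁ * x ^ a + c₂ * y ^ b := by
    have h₁ := mul_le_mul_of_nonneg_right hma hxa.le
    have h₂ := mul_le_mul_of_nonneg_right hmb hyb.le
    have : m * (x ^ a + y ^ b) = m * x ^ a + m * y ^ b := by ring
    linarith
  calc c₁ * x ^ a + c₂ * y ^ b ≥ m * (x ^ a + y ^ b) := hfin
    _ ≥ _ := this
end

section
/- Let ε ∈ (0,1). Then: (a) 0 ≤ h̃_ε(y) ≤ y and 0 ≤ h̃_ε'(y) ≤ 2 for all y > 0; and (b) there exists a constant c₀ ∈ (0,1) such that for all 0 < y ≤ 2c₀: h̃_ε(y) ≥ y/2, 1/2 ≤ h̃_ε'(y) ≤ 1, and −h̃_ε''(y) ≥ (ε/2) y^{ε−1}. -/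
open Real

/-- `h̃_ε(y) := y − (1+ε)^{−1} y^{1+ε} (1+y)^{−ε}`. -/
noncomputable def htil (ε y : ℝ) : ℝ := y - (1 + ε)⁻¹ * y ^ (1 + ε) * (1 + y) ^ (-ε)

/-!
Put `t = y / (1 + y) ∈ (0, 1)`, so that `h̃_ε(y) = y (1 - t^ε / (1 + ε))`,
`h̃_ε'(y) = 1 - (1 - ε t / (1 + ε)) t^ε` and `h̃_ε''(y) = -ε t^(ε-1) (1 - t)^3`.
Since `t^ε ∈ [0, 1]`, the first two formulas give the global bounds. For small `y` we have
`t^ε ≤ y^ε ≤ 1/2`, `t^(ε-1) ≥ y^(ε-1)` (as `t ≤ y` and `ε ≤ 1`) and `(1 - t)^3 ≥ 1/2`,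
which give the local ones.
-/

section

variable {ε y : ℝ}

lemma hasDerivAt_div_one_add_self (hy : 1 + y ≠ 0) :
    HasDerivAt (fun x : ℝ => x / (1 + x)) ((1 - y / (1 + y)) ^ 2) y := by
  have h := (hasDerivAt_id y).div ((hasDerivAt_id y).const_add 1) hy
  refine h.congr_deriv ?_
  simp only [id]
  field_simp
  ring

lemma div_one_add_self_le_self (hy : 0 ≤ y) : y / (1 + y) ≤ y :=
  div_le_self hy (by linarith)

lemma div_one_add_self_le_one (hy : 0 ≤ y) : y / (1 + y) ≤ 1 :=
  (div_le_one (by linarith)).2 (by linarith)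

lemma htil_eq (hε : 1 + ε ≠ 0) (hy : 0 ≤ y) :
    htil ε y = y * (1 - (1 + ε)⁻¹ * (y / (1 + y)) ^ ε) := by
  rw [htil, rpow_one_add' hy hε, div_rpow hy (by linarith), rpow_neg (by linarith)]
  ring

noncomputable def htilDeriv (ε y : ℝ) : ℝ :=
  1 - (1 - ε / (1 + ε) * (y / (1 + y))) * (y / (1 + y)) ^ ε

lemma hasDerivAt_htil (hε : 1 + ε ≠ 0) (hy : 0 < y) :
    HasDerivAt (htil ε) (htilDeriv ε y) y := by
  have ht : 0 < y / (1 + y) := by positivity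
  have hrpow := (hasDerivAt_div_one_add_self (y := y) (by positivity)).rpow_const
    (p := ε) (Or.inl ht.ne')
  have h := (hasDerivAt_id y).mul ((hrpow.const_mul (1 + ε)⁻¹).const_sub 1)
  have heq : (fun x => x * (1 - (1 + ε)⁻¹ * (x / (1 + x)) ^ ε)) =ᶠ[nhds y] htil ε := by
    filter_upwards [Ioi_mem_nhds hy] with x hx
    exact (htil_eq hε (le_of_lt hx)).symm
  refine (h.congr_of_eventuallyEq heq.symm).congr_deriv ?_
  rw [htilDeriv, rpow_sub_one ht.ne']
  simp only [id]
  field_simp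
  ring

lemma hasDerivAt_htilDeriv (hε : 1 + ε ≠ 0) (hy : 0 < y) :
    HasDerivAt (htilDeriv ε)
      (-(ε * (y / (1 + y)) ^ (ε - 1) * (1 - y / (1 + y)) ^ 3)) y := by
  have ht : 0 < y / (1 + y) := by positivity
  have hdt := hasDerivAt_div_one_add_self (y := y) (by positivity)
  have h := ((hdt.const_mul (ε / (1 + ε))).const_sub 1).mul
    (hdt.rpow_const (p := ε) (Or.inl ht.ne')) |>.const_sub 1
  refine h.congr_deriv ?_
  rw [rpow_sub_one ht.ne']
  field_simp
  ring

lemma deriv_deriv_htil (hε : 1 + ε ≠ 0) (hy : 0 < y) :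
    deriv (deriv (htil ε)) y = -(ε * (y / (1 + y)) ^ (ε - 1) * (1 - y / (1 + y)) ^ 3) := by
  have heq : deriv (htil ε) =ᶠ[nhds y] htilDeriv ε := by
    filter_upwards [Ioi_mem_nhds hy] with x hx
    exact (hasDerivAt_htil hε hx).deriv
  rw [heq.deriv_eq, (hasDerivAt_htilDeriv hε hy).deriv]

lemma rpow_div_one_add_self_le_one (hε : 0 ≤ ε) (hy : 0 ≤ y) : (y / (1 + y)) ^ ε ≤ 1 :=
  rpow_le_one (by positivity) (div_one_add_self_le_one hy) hε

lemma rpow_div_one_add_self_le_half (hε : 0 < ε) (hy : 0 ≤ y) (hy' : y ≤ (1 / 2) ^ ε⁻¹) :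
    (y / (1 + y)) ^ ε ≤ 1 / 2 :=
  calc (y / (1 + y)) ^ ε ≤ ((1 / 2) ^ ε⁻¹) ^ ε :=
        rpow_le_rpow (by positivity) ((div_one_add_self_le_self hy).trans hy') hε.le
    _ = 1 / 2 := rpow_inv_rpow (by norm_num) hε.ne'

lemma inv_one_add_mul_le (hε : 0 ≤ ε) {a : ℝ} (ha : 0 ≤ a) : (1 + ε)⁻¹ * a ≤ a :=
  mul_le_of_le_one_left ha (inv_le_one_of_one_le₀ (by linarith))

lemma htil_nonneg (hε : 0 ≤ ε) (hy : 0 ≤ y) : 0 ≤ htil ε y := by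
  have hP := rpow_div_one_add_self_le_one hε hy
  have hcP := inv_one_add_mul_le hε (by positivity : 0 ≤ (y / (1 + y)) ^ ε)
  rw [htil_eq (by positivity) hy]
  exact mul_nonneg hy (by linarith)

lemma htil_le_self (hε : 0 ≤ ε) (hy : 0 ≤ y) : htil ε y ≤ y := by
  have hcP : 0 ≤ (1 + ε)⁻¹ * (y / (1 + y)) ^ ε := by positivity
  rw [htil_eq (by positivity) hy]
  nlinarith

lemma half_le_htil (hε : 0 ≤ ε) (hy : 0 ≤ y) (hP : (y / (1 + y)) ^ ε ≤ 1 / 2) :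
    y / 2 ≤ htil ε y := by
  have hcP := inv_one_add_mul_le hε (by positivity : 0 ≤ (y / (1 + y)) ^ ε)
  rw [htil_eq (by positivity) hy]
  nlinarith

lemma one_sub_mul_div_one_add_self_mem_Icc (hε : 0 ≤ ε) (hy : 0 ≤ y) :
    1 - ε / (1 + ε) * (y / (1 + y)) ∈ Set.Icc 0 1 := by
  have ha : ε / (1 + ε) ≤ 1 := (div_le_one (by linarith)).2 (by linarith)
  have ht := div_one_add_self_le_one hy
  constructor
  · nlinarith [show 0 ≤ y / (1 + y) by positivity]
  · nlinarith [show 0 ≤ ε / (1 + ε) * (y / (1 + y)) by positivity]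

lemma htilDeriv_nonneg (hε : 0 ≤ ε) (hy : 0 ≤ y) : 0 ≤ htilDeriv ε y := by
  obtain ⟨hQ0, hQ1⟩ := one_sub_mul_div_one_add_self_mem_Icc hε hy
  have hP := rpow_div_one_add_self_le_one hε hy
  rw [htilDeriv]
  nlinarith [show 0 ≤ (y / (1 + y)) ^ ε by positivity]

lemma htilDeriv_le_one (hε : 0 ≤ ε) (hy : 0 ≤ y) : htilDeriv ε y ≤ 1 := by
  obtain ⟨hQ0, -⟩ := one_sub_mul_div_one_add_self_mem_Icc hε hy
  rw [htilDeriv]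
  nlinarith [show 0 ≤ (y / (1 + y)) ^ ε by positivity]

lemma half_le_htilDeriv (hε : 0 ≤ ε) (hy : 0 ≤ y) (hP : (y / (1 + y)) ^ ε ≤ 1 / 2) :
    1 / 2 ≤ htilDeriv ε y := by
  obtain ⟨hQ0, hQ1⟩ := one_sub_mul_div_one_add_self_mem_Icc hε hy
  rw [htilDeriv]
  nlinarith [show 0 ≤ (y / (1 + y)) ^ ε by positivity]

lemma half_mul_rpow_le_neg_deriv_deriv_htil (hε : 0 ≤ ε) (hε' : ε ≤ 1) (hy : 0 < y)
    (hy' : y ≤ 1 / 5) : ε / 2 * y ^ (ε - 1) ≤ -deriv (deriv (htil ε)) y := by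
  have ht := div_one_add_self_le_self hy.le
  have hpow : y ^ (ε - 1) ≤ (y / (1 + y)) ^ (ε - 1) :=
    rpow_le_rpow_of_nonpos (by positivity) ht (by linarith)
  have hcube : (4 / 5 : ℝ) ^ 3 ≤ (1 - y / (1 + y)) ^ 3 :=
    pow_le_pow_left₀ (by norm_num) (by linarith) 3
  rw [deriv_deriv_htil (by positivity) hy, neg_neg]
  calc ε / 2 * y ^ (ε - 1) ≤ ε * (y / (1 + y)) ^ (ε - 1) * (4 / 5) ^ 3 := by
        nlinarith [show 0 ≤ ε * (y / (1 + y)) ^ (ε - 1) by positivity]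
    _ ≤ ε * (y / (1 + y)) ^ (ε - 1) * (1 - y / (1 + y)) ^ 3 := by gcongr

end

theorem htil_properties (ε : ℝ) (hε : 0 < ε) (hε' : ε < 1) :
    (∀ y : ℝ, 0 < y →
        0 ≤ htil ε y ∧ htil ε y ≤ y ∧ 0 ≤ deriv (htil ε) y ∧ deriv (htil ε) y ≤ 2) ∧
      ∃ c₀ : ℝ, 0 < c₀ ∧ c₀ < 1 ∧ ∀ y : ℝ, 0 < y → y ≤ 2 * c₀ →
        htil ε y ≥ y / 2 ∧ 1 / 2 ≤ deriv (htil ε) y ∧ deriv (htil ε) y ≤ 1 ∧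
          -(deriv (deriv (htil ε)) y) ≥ ε / 2 * y ^ (ε - 1) := by
  have hderiv {y : ℝ} (hy : 0 < y) : deriv (htil ε) y = htilDeriv ε y :=
    (hasDerivAt_htil (by positivity) hy).deriv
  have hhalf_pos : 0 < (1 / 2 : ℝ) ^ ε⁻¹ := by positivity
  have hhalf_le : (1 / 2 : ℝ) ^ ε⁻¹ ≤ 1 := rpow_le_one (by norm_num) (by norm_num) (by positivity)
  refine ⟨fun y hy => ?_, (1 / 2) ^ ε⁻¹ / 10, by positivity, by linarith, fun y hy hyc => ?_⟩
  · rw [hderiv hy]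
    exact ⟨htil_nonneg hε.le hy.le, htil_le_self hε.le hy.le, htilDeriv_nonneg hε.le hy.le,
      (htilDeriv_le_one hε.le hy.le).trans one_le_two⟩
  · have hP := rpow_div_one_add_self_le_half hε hy.le (by linarith)
    rw [hderiv hy]
    exact ⟨half_le_htil hε.le hy.le hP, half_le_htilDeriv hε.le hy.le hP,
      htilDeriv_le_one hε.le hy.le,
      half_mul_rpow_le_neg_deriv_deriv_htil hε.le hε'.le hy (by linarith)⟩
end

section
/- Assume one of the following holds: (a) r₁ ≥ 0 and θ₂ − 1 < r₂ < 0; (b) r₂ ≥ 0 and θ₁ − 1 < r₁ < 0; (c) θ₁ − 1 < r₁ < 0, θ₂ − 1 < r₂ < 0 and (r₁ + 1 − θ₁)(r₂ + 1 − θ₂) > κ₁κ₂. Then there exist constants ρ₁, ρ₂ > max(θ₁, θ₂) such that, with g(x,y) := x^{−ρ₁} + y^{−ρ₂}, for every integer n ≥ 1 there is a constant C_n > 0 with ℒg(x,y) ≤ C_n · g(x,y) for all 0 < x, y ≤ n. -/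
open Real MeasureTheory
open scoped Classical

/-- The spectrally positive `α`-stable jump measure on `(0,∞)` with density
`z ↦ (α(α−1)/(Γ(α)Γ(2−α))) z^{−1−α}`. -/
noncomputable def muStable (α : ℝ) : Measure ℝ :=
  volume.withDensity fun z =>
    ENNReal.ofReal
      (if 0 < z then α * (α - 1) / (Real.Gamma α * Real.Gamma (2 - α)) * z ^ (-1 - α) else 0)

/-- Partial derivative in the first variable. -/
noncomputable def pX (g : ℝ → ℝ → ℝ) (x y : ℝ) : ℝ := deriv (fun t => g t y) x

/-- Partial derivative in the second variable. -/
noncomputable def pY (g : ℝ → ℝ → ℝ) (x y : ℝ) : ℝ := deriv (fun t => g x t) y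

/-- Second partial derivative in the first variable. -/
noncomputable def pXX (g : ℝ → ℝ → ℝ) (x y : ℝ) : ℝ := deriv (fun t => pX g t y) x

/-- Second partial derivative in the second variable. -/
noncomputable def pYY (g : ℝ → ℝ → ℝ) (x y : ℝ) : ℝ := deriv (fun t => pY g x t) y

/-- The generator `ℒ` of the two–dimensional system (1.1). -/
noncomputable def Lop (α₁ α₂ a₁ a₂ κ₁ κ₂ θ₁ θ₂ r₁₀ r₁₁ r₁₂ r₂₀ r₂₁ r₂₂
    b₁₀ b₁₁ b₁₂ b₂₀ b₂₁ b₂₂ : ℝ) (g : ℝ → ℝ → ℝ) (x y : ℝ) : ℝ :=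
  a₁ * x ^ θ₁ * y ^ κ₁ * pX g x y + a₂ * y ^ θ₂ * x ^ κ₂ * pY g x y
    - b₁₀ * x ^ r₁₀ * pX g x y + b₁₁ * x ^ r₁₁ * pXX g x y
    + b₁₂ * x ^ r₁₂ *
        ∫ z in Set.Ioi (0 : ℝ), (g (x + z) y - g x y - z * pX g x y) ∂ muStable α₁
    - b₂₀ * y ^ r₂₀ * pY g x y + b₂₁ * y ^ r₂₁ * pYY g x y
    + b₂₂ * y ^ r₂₂ *
        ∫ z in Set.Ioi (0 : ℝ), (g x (y + z) - g x y - z * pY g x y) ∂ muStable α₂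

/-- `rᵢ := min{ r_{ij} − ϱ_{ij} : j ∈ {0,1,2}, b_{ij} ≠ 0 }` where
`ϱ_{i0} = 1`, `ϱ_{i1} = 2`, `ϱ_{i2} = α`. -/
noncomputable def rExp (α r₀ r₁ r₂ b₀ b₁ b₂ : ℝ) : ℝ :=
  sInf {v : ℝ | (b₀ ≠ 0 ∧ v = r₀ - 1) ∨ (b₁ ≠ 0 ∧ v = r₁ - 2) ∨ (b₂ ≠ 0 ∧ v = r₂ - α)}

/-- `bᵢ := Σ_{j : b_{ij} ≠ 0, r_{ij} − ϱ_{ij} = rᵢ} b_{ij}`. -/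
noncomputable def bCoef (α r₀ r₁ r₂ b₀ b₁ b₂ : ℝ) : ℝ :=
  (if b₀ ≠ 0 ∧ r₀ - 1 = rExp α r₀ r₁ r₂ b₀ b₁ b₂ then b₀ else 0) +
    (if b₁ ≠ 0 ∧ r₁ - 2 = rExp α r₀ r₁ r₂ b₀ b₁ b₂ then b₁ else 0) +
    (if b₂ ≠ 0 ∧ r₂ - α = rExp α r₀ r₁ r₂ b₀ b₁ b₂ then b₂ else 0)

/-- `min{ r_{ij} − ϱ_{ij} : j ∈ {1,2}, b_{ij} ≠ 0 }`. -/
noncomputable def rExp12 (α r₁ r₂ b₁ b₂ : ℝ) : ℝ :=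
  sInf {v : ℝ | (b₁ ≠ 0 ∧ v = r₁ - 2) ∨ (b₂ ≠ 0 ∧ v = r₂ - α)}

/-!
For `g = x ^ (-ρ₁) + y ^ (-ρ₂)` the generator splits into a one-dimensional generator acting on
each power plus the two interaction drifts, which are negative:
`-a₁ ρ₁ x ^ (θ₁ - 1 - ρ₁) y ^ κ₁` and its mirror image. The drift, diffusion and compensated
`α₁`-stable jump parts applied to `x ^ (-ρ₁)` scale like `x ^ (r₁ⱼ - ϱ₁ⱼ - ρ₁)`, so on `x ≤ n` the
first one-dimensional part is at most `B x ^ (r₁ - ρ₁)`. If `r₁ ≥ 0` this is `O(x ^ (-ρ₁))`.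
Otherwise, where `B x ^ (r₁ + 1 - θ₁) ≤ a₁ ρ₁ y ^ κ₁` the interaction drift cancels it, and
elsewhere `y` is so small that `y ^ (-ρ₂)` dominates it, provided
`κ₁ (ρ₁ - r₁) ≤ (r₁ + 1 - θ₁) ρ₂`. Each of the conditions (a)–(c) allows a choice of large
`ρ₁, ρ₂` satisfying this balance in both coordinates.
-/

open Set Filter

lemma rpow_neg_tangent_le {ρ x y : ℝ} (hρ : 0 ≤ ρ) (hx : 0 < x) (hy : 0 < y) :
    x ^ (-ρ) - ρ * (y - x) * x ^ (-ρ - 1) ≤ y ^ (-ρ) := by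
  -- Bernoulli's inequality with exponent `ρ + 1` at `s = x / y - 1`
  have hb := one_add_mul_self_le_rpow_one_add (s := x / y - 1)
    (by linarith [div_pos hx hy]) (p := ρ + 1) (by linarith)
  have hxρ : x ^ (ρ + 1) = (x ^ (-ρ - 1))⁻¹ := by
    rw [← rpow_neg hx.le]; ring_nf
  have hyρ : y ^ (ρ + 1) = (y ^ (-ρ - 1))⁻¹ := by
    rw [← rpow_neg hy.le]; ring_nf
  have hpow : ∀ t : ℝ, 0 < t → t ^ (-ρ) = t * t ^ (-ρ - 1) := fun t ht => by
    conv_lhs => rw [show -ρ = 1 + (-ρ - 1) by ring, rpow_add ht, rpow_one]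
  rw [add_sub_cancel, div_rpow hx.le hy.le, hxρ, hyρ, inv_div_inv,
    le_div_iff₀ (by positivity)] at hb
  rw [hpow x hx, hpow y hy]
  calc x * x ^ (-ρ - 1) - ρ * (y - x) * x ^ (-ρ - 1)
      = y * ((1 + (ρ + 1) * (x / y - 1)) * x ^ (-ρ - 1)) := by field_simp; ring
    _ ≤ y * y ^ (-ρ - 1) := by gcongr

lemma rpow_neg_increment_le {ρ x z : ℝ} (hρ : 0 ≤ ρ) (hx : 0 < x) (hz : 0 ≤ z) :
    (x + z) ^ (-ρ) - x ^ (-ρ) - z * (-ρ * x ^ (-ρ - 1)) ≤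
      ρ * z * (x ^ (-ρ - 1) - (x + z) ^ (-ρ - 1)) := by
  linear_combination rpow_neg_tangent_le hρ (by linarith : 0 < x + z) hx

lemma rpow_neg_increment_nonneg {ρ x z : ℝ} (hρ : 0 ≤ ρ) (hx : 0 < x) (hz : 0 ≤ z) :
    0 ≤ (x + z) ^ (-ρ) - x ^ (-ρ) - z * (-ρ * x ^ (-ρ - 1)) := by
  linear_combination rpow_neg_tangent_le hρ hx (by linarith : 0 < x + z)

lemma rpow_neg_increment_le_sq {ρ x z : ℝ} (hρ : 0 ≤ ρ) (hx : 0 < x) (hz : 0 ≤ z) :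
    (x + z) ^ (-ρ) - x ^ (-ρ) - z * (-ρ * x ^ (-ρ - 1)) ≤
      ρ * (ρ + 1) * x ^ (-ρ - 2) * z ^ 2 := by
  have h := rpow_neg_tangent_le (by linarith : 0 ≤ ρ + 1) hx (by linarith : 0 < x + z)
  rw [show -(ρ + 1) = -ρ - 1 by ring, show -ρ - 1 - 1 = -ρ - 2 by ring] at h
  have : ρ * z * (x ^ (-ρ - 1) - (x + z) ^ (-ρ - 1)) ≤ ρ * z * ((ρ + 1) * z * x ^ (-ρ - 2)) := by
    gcongr; linarith
  linarith [rpow_neg_increment_le hρ hx hz]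

lemma rpow_neg_increment_le_linear {ρ x z : ℝ} (hρ : 0 ≤ ρ) (hx : 0 < x) (hz : 0 ≤ z) :
    (x + z) ^ (-ρ) - x ^ (-ρ) - z * (-ρ * x ^ (-ρ - 1)) ≤ ρ * x ^ (-ρ - 1) * z := by
  have : 0 ≤ ρ * z * (x + z) ^ (-ρ - 1) := by positivity
  linarith [rpow_neg_increment_le hρ hx hz]

lemma deriv_deriv_rpow_neg (ρ x : ℝ) :
    deriv (deriv fun t => t ^ (-ρ)) x = ρ * (ρ + 1) * x ^ (-ρ - 2) := by
  simp only [Real.deriv_rpow_const', deriv_const_mul_field']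
  ring_nf

noncomputable def stableConst (α : ℝ) : ℝ := α * (α - 1) / (Gamma α * Gamma (2 - α))

lemma stableConst_pos {α : ℝ} (hα : 1 < α) (hα' : α < 2) : 0 < stableConst α :=
  div_pos (by nlinarith) (mul_pos (Gamma_pos_of_pos (by linarith)) (Gamma_pos_of_pos (by linarith)))

lemma setIntegral_Ioi_muStable {α : ℝ} (hα : 1 < α) (hα' : α < 2) (F : ℝ → ℝ) :
    ∫ z in Ioi 0, F z ∂muStable α = ∫ z in Ioi 0, stableConst α * z ^ (-1 - α) * F z := by
  have hmeas : Measurable fun z : ℝ => if 0 < z then stableConst α * z ^ (-1 - α) else 0 :=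
    Measurable.ite measurableSet_Ioi (by fun_prop) measurable_const
  have hμ : muStable α = volume.withDensity fun z =>
      ENNReal.ofReal (if 0 < z then stableConst α * z ^ (-1 - α) else 0) := rfl
  rw [hμ, setIntegral_withDensity_eq_setIntegral_toReal_smul hmeas.ennreal_ofReal
    (ae_of_all _ fun _ => ENNReal.ofReal_lt_top) F measurableSet_Ioi]
  refine setIntegral_congr_fun measurableSet_Ioi fun z (hz : 0 < z) => ?_
  rw [if_pos hz, ENNReal.toReal_ofReal (by have := stableConst_pos hα hα'; positivity),
    smul_eq_mul]

lemma integrableOn_Ioi_piecewise_rpow {α x : ℝ} (hα : 1 < α) (hα' : α < 2) (hx : 0 < x)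
    (c₁ c₂ : ℝ) :
    IntegrableOn (fun z => if z ≤ x then c₁ * z ^ (1 - α) else c₂ * z ^ (-α)) (Ioi 0) := by
  rw [← Ioc_union_Ioi_eq_Ioi hx.le]
  refine IntegrableOn.union ?_ ?_
  · refine IntegrableOn.congr_fun
      ((intervalIntegral.intervalIntegrable_rpow' (by linarith : (-1 : ℝ) < 1 - α)).1.const_mul c₁)
      (fun z hz => ?_) measurableSet_Ioc
    simp only [if_pos hz.2]
  · refine IntegrableOn.congr_fun
      ((integrableOn_Ioi_rpow_of_lt (by linarith : -α < -1) hx).const_mul c₂)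
      (fun z (hz : x < z) => ?_) measurableSet_Ioi
    simp only [if_neg hz.not_ge]

lemma setIntegral_Ioi_piecewise_rpow {α x : ℝ} (hα : 1 < α) (hα' : α < 2) (hx : 0 < x)
    (c₁ c₂ : ℝ) :
    ∫ z in Ioi 0, (if z ≤ x then c₁ * z ^ (1 - α) else c₂ * z ^ (-α)) =
      c₁ * x ^ (2 - α) / (2 - α) + c₂ * x ^ (1 - α) / (α - 1) := by
  have hint := integrableOn_Ioi_piecewise_rpow hα hα' hx c₁ c₂
  rw [← Ioc_union_Ioi_eq_Ioi hx.le] at hint ⊢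
  rw [setIntegral_union (Ioc_disjoint_Ioi le_rfl) measurableSet_Ioi
    (hint.mono_set subset_union_left) (hint.mono_set subset_union_right),
    setIntegral_congr_fun measurableSet_Ioc (g := fun z => c₁ * z ^ (1 - α))
      (fun z hz => by simp only [if_pos hz.2]),
    setIntegral_congr_fun measurableSet_Ioi (g := fun z => c₂ * z ^ (-α))
      (fun z (hz : x < z) => by simp only [if_neg hz.not_ge]),
    ← intervalIntegral.integral_of_le hx.le, intervalIntegral.integral_const_mul,
    integral_rpow (Or.inl (by linarith)), integral_const_mul,
    integral_Ioi_rpow_of_lt (by linarith) hx, zero_rpow (by linarith)]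
  have : 1 - α ≠ 0 := by linarith
  have : α - 1 ≠ 0 := by linarith
  have : 2 - α ≠ 0 := by linarith
  rw [show 1 - α + 1 = 2 - α by ring, show -α + 1 = 1 - α by ring, sub_zero]
  field_simp
  ring

lemma stable_mul_rpow_neg_increment_le {α ρ c x z : ℝ} (hρ : 0 ≤ ρ) (hc : 0 ≤ c) (hx : 0 < x)
    (hz : 0 < z) :
    c * z ^ (-1 - α) * ((x + z) ^ (-ρ) - x ^ (-ρ) - z * (-ρ * x ^ (-ρ - 1))) ≤
      if z ≤ x then c * (ρ * (ρ + 1) * x ^ (-ρ - 2)) * z ^ (1 - α)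
      else c * (ρ * x ^ (-ρ - 1)) * z ^ (-α) := by
  split_ifs
  · calc _ ≤ c * z ^ (-1 - α) * (ρ * (ρ + 1) * x ^ (-ρ - 2) * z ^ 2) := by
          gcongr; exact rpow_neg_increment_le_sq hρ hx hz.le
      _ = c * (ρ * (ρ + 1) * x ^ (-ρ - 2)) * (z ^ (-1 - α) * z ^ (2 : ℝ)) := by
          rw [rpow_two]; ring
      _ = _ := by rw [← rpow_add hz]; ring_nf
  · calc _ ≤ c * z ^ (-1 - α) * (ρ * x ^ (-ρ - 1) * z) := by
          gcongr; exact rpow_neg_increment_le_linear hρ hx hz.le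
      _ = c * (ρ * x ^ (-ρ - 1)) * (z ^ (-1 - α) * z ^ (1 : ℝ)) := by rw [rpow_one]; ring
      _ = _ := by rw [← rpow_add hz]; ring_nf

lemma exists_setIntegral_muStable_rpow_neg_le {α ρ : ℝ} (hα : 1 < α) (hα' : α < 2)
    (hρ : 0 ≤ ρ) :
    ∃ J, 0 ≤ J ∧ ∀ x, 0 < x →
      ∫ z in Ioi 0, ((x + z) ^ (-ρ) - x ^ (-ρ) - z * (-ρ * x ^ (-ρ - 1))) ∂muStable α ≤
        J * x ^ (-ρ - α) := by
  have hc := stableConst_pos hα hα'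
  set c := stableConst α
  refine ⟨c * (ρ * (ρ + 1) / (2 - α) + ρ / (α - 1)),
    mul_nonneg hc.le (add_nonneg (div_nonneg (by positivity) (by linarith))
      (div_nonneg hρ (by linarith))), fun x hx => ?_⟩
  set c₁ := c * (ρ * (ρ + 1) * x ^ (-ρ - 2))
  set c₂ := c * (ρ * x ^ (-ρ - 1))
  rw [setIntegral_Ioi_muStable hα hα']
  calc _ ≤ ∫ z in Ioi 0, (if z ≤ x then c₁ * z ^ (1 - α) else c₂ * z ^ (-α)) := by
        refine integral_mono_of_nonneg ?_ (integrableOn_Ioi_piecewise_rpow hα hα' hx c₁ c₂) ?_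
        · filter_upwards [self_mem_ae_restrict measurableSet_Ioi] with z (hz : 0 < z)
          have := rpow_neg_increment_nonneg hρ hx hz.le
          positivity
        · filter_upwards [self_mem_ae_restrict measurableSet_Ioi] with z (hz : 0 < z)
          exact stable_mul_rpow_neg_increment_le hρ hc.le hx hz
    _ = c * (ρ * (ρ + 1) / (2 - α) * (x ^ (-ρ - 2) * x ^ (2 - α))
          + ρ / (α - 1) * (x ^ (-ρ - 1) * x ^ (1 - α))) := by
        rw [setIntegral_Ioi_piecewise_rpow hα hα' hx]; ring
    _ = _ := by simp only [← rpow_add hx]; ring_nf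

noncomputable def componentGenerator (α r₀ r₁ r₂ b₀ b₁ b₂ : ℝ) (f : ℝ → ℝ) (x : ℝ) : ℝ :=
  -(b₀ * x ^ r₀ * deriv f x) + b₁ * x ^ r₁ * deriv (deriv f) x
    + b₂ * x ^ r₂ * ∫ z in Ioi (0 : ℝ), (f (x + z) - f x - z * deriv f x) ∂muStable α

section Generator

variable {α₁ α₂ a₁ a₂ κ₁ κ₂ θ₁ θ₂ r₁₀ r₁₁ r₁₂ r₂₀ r₂₁ r₂₂ b₁₀ b₁₁ b₁₂ b₂₀ b₂₁ b₂₂ : ℝ}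

lemma Lop_separable (f h : ℝ → ℝ) (x y : ℝ) :
    Lop α₁ α₂ a₁ a₂ κ₁ κ₂ θ₁ θ₂ r₁₀ r₁₁ r₁₂ r₂₀ r₂₁ r₂₂ b₁₀ b₁₁ b₁₂ b₂₀ b₂₁ b₂₂
        (fun x y => f x + h y) x y =
      a₁ * x ^ θ₁ * y ^ κ₁ * deriv f x + a₂ * y ^ θ₂ * x ^ κ₂ * deriv h y
        + componentGenerator α₁ r₁₀ r₁₁ r₁₂ b₁₀ b₁₁ b₁₂ f x
        + componentGenerator α₂ r₂₀ r₂₁ r₂₂ b₂₀ b₂₁ b₂₂ h y := by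
  have hx : ∀ z, f (x + z) + h y - (f x + h y) - z * deriv f x = f (x + z) - f x - z * deriv f x :=
    fun z => by ring
  have hy : ∀ z, f x + h (y + z) - (f x + h y) - z * deriv h y = h (y + z) - h y - z * deriv h y :=
    fun z => by ring
  simp only [Lop, componentGenerator, pX, pY, pXX, pYY, deriv_add_const, deriv_const_add, hx, hy]
  ring

lemma Lop_rpow_neg_add_rpow_neg {ρ₁ ρ₂ x y : ℝ} (hx : 0 < x) (hy : 0 < y) :
    Lop α₁ α₂ a₁ a₂ κ₁ κ₂ θ₁ θ₂ r₁₀ r₁₁ r₁₂ r₂₀ r₂₁ r₂₂ b₁₀ b₁₁ b₁₂ b₂₀ b₂₁ b₂₂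
        (fun x y => x ^ (-ρ₁) + y ^ (-ρ₂)) x y =
      (componentGenerator α₁ r₁₀ r₁₁ r₁₂ b₁₀ b₁₁ b₁₂ (fun t => t ^ (-ρ₁)) x
          - a₁ * ρ₁ * x ^ (θ₁ - 1 - ρ₁) * y ^ κ₁)
        + (componentGenerator α₂ r₂₀ r₂₁ r₂₂ b₂₀ b₂₁ b₂₂ (fun t => t ^ (-ρ₂)) y
          - a₂ * ρ₂ * y ^ (θ₂ - 1 - ρ₂) * x ^ κ₂) := by
  rw [Lop_separable, Real.deriv_rpow_const, Real.deriv_rpow_const,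
    show θ₁ - 1 - ρ₁ = θ₁ + (-ρ₁ - 1) by ring, rpow_add hx,
    show θ₂ - 1 - ρ₂ = θ₂ + (-ρ₂ - 1) by ring, rpow_add hy]
  ring

end Generator

lemma rExp_le {α r₀ r₁ r₂ b₀ b₁ b₂ v : ℝ}
    (hv : (b₀ ≠ 0 ∧ v = r₀ - 1) ∨ (b₁ ≠ 0 ∧ v = r₁ - 2) ∨ (b₂ ≠ 0 ∧ v = r₂ - α)) :
    rExp α r₀ r₁ r₂ b₀ b₁ b₂ ≤ v := by
  refine csInf_le ⟨min (min (r₀ - 1) (r₁ - 2)) (r₂ - α), ?_⟩ hv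
  rintro w (⟨-, rfl⟩ | ⟨-, rfl⟩ | ⟨-, rfl⟩) <;> simp

lemma mul_rpow_le_mul_rpow_of_le {b e r ρ n x : ℝ} (hb : 0 ≤ b) (her : b ≠ 0 → r ≤ e)
    (hx : 0 < x) (hxn : x ≤ n) :
    b * x ^ (e - ρ) ≤ b * n ^ (e - r) * x ^ (r - ρ) := by
  rcases eq_or_ne b 0 with rfl | hb₀
  · simp
  calc b * x ^ (e - ρ) = b * (x ^ (e - r) * x ^ (r - ρ)) := by rw [← rpow_add hx]; ring_nf
    _ ≤ b * (n ^ (e - r) * x ^ (r - ρ)) := by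
        gcongr; linarith [her hb₀]
    _ = b * n ^ (e - r) * x ^ (r - ρ) := by ring

lemma exists_componentGenerator_rpow_neg_le {α r₀ r₁ r₂ b₀ b₁ b₂ ρ n : ℝ} (hα : 1 < α)
    (hα' : α < 2) (hρ : 0 ≤ ρ) (hb₀ : 0 ≤ b₀) (hb₁ : 0 ≤ b₁) (hb₂ : 0 ≤ b₂) (hn : 0 < n) :
    ∃ B, 0 ≤ B ∧ ∀ x, 0 < x → x ≤ n →
      componentGenerator α r₀ r₁ r₂ b₀ b₁ b₂ (fun t => t ^ (-ρ)) x ≤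
        B * x ^ (rExp α r₀ r₁ r₂ b₀ b₁ b₂ - ρ) := by
  obtain ⟨J, hJ, hjump⟩ := exists_setIntegral_muStable_rpow_neg_le hα hα' hρ
  set r := rExp α r₀ r₁ r₂ b₀ b₁ b₂
  refine ⟨b₀ * ρ * n ^ (r₀ - 1 - r) + b₁ * (ρ * (ρ + 1)) * n ^ (r₁ - 2 - r)
    + b₂ * J * n ^ (r₂ - α - r), by positivity, fun x hx hxn => ?_⟩
  have h₀ := mul_rpow_le_mul_rpow_of_le (b := b₀ * ρ) (e := r₀ - 1) (r := r) (ρ := ρ)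
    (by positivity) (fun h => rExp_le (Or.inl ⟨left_ne_zero_of_mul h, rfl⟩)) hx hxn
  have h₁ := mul_rpow_le_mul_rpow_of_le (b := b₁ * (ρ * (ρ + 1))) (e := r₁ - 2) (r := r) (ρ := ρ)
    (by positivity) (fun h => rExp_le (Or.inr (Or.inl ⟨left_ne_zero_of_mul h, rfl⟩))) hx hxn
  have h₂ := mul_rpow_le_mul_rpow_of_le (b := b₂ * J) (e := r₂ - α) (r := r) (ρ := ρ)
    (by positivity) (fun h => rExp_le (Or.inr (Or.inr ⟨left_ne_zero_of_mul h, rfl⟩))) hx hxn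
  have hjx : b₂ * x ^ r₂ * ∫ z in Ioi 0, ((x + z) ^ (-ρ) - x ^ (-ρ) - z * (-ρ * x ^ (-ρ - 1)))
      ∂muStable α ≤ b₂ * J * x ^ (r₂ - α - ρ) := by
    calc _ ≤ b₂ * x ^ r₂ * (J * x ^ (-ρ - α)) := by gcongr; exact hjump x hx
      _ = b₂ * J * x ^ (r₂ - α - ρ) := by
        rw [show r₂ - α - ρ = r₂ + (-ρ - α) by ring, rpow_add hx]; ring
  have hdrift : -(b₀ * x ^ r₀ * (-ρ * x ^ (-ρ - 1))) = b₀ * ρ * x ^ (r₀ - 1 - ρ) := by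
    rw [show r₀ - 1 - ρ = r₀ + (-ρ - 1) by ring, rpow_add hx]; ring
  have hdiff :
      b₁ * x ^ r₁ * (ρ * (ρ + 1) * x ^ (-ρ - 2)) = b₁ * (ρ * (ρ + 1)) * x ^ (r₁ - 2 - ρ) := by
    rw [show r₁ - 2 - ρ = r₁ + (-ρ - 2) by ring, rpow_add hx]; ring
  rw [componentGenerator, deriv_deriv_rpow_neg, Real.deriv_rpow_const, hdrift, hdiff]
  linarith

lemma exists_mul_rpow_le_of_balance {κ β s ρ' n A B : ℝ} (hκ : 0 < κ) (hA : 0 < A)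
    (hB : 0 ≤ B) (hρ' : 0 ≤ ρ') (hn : 0 < n) (hbal : 0 ≤ κ * s + β * ρ') :
    ∃ C, 0 ≤ C ∧ ∀ x y, 0 < x → x ≤ n → 0 < y →
      B * x ^ s ≤ A * x ^ (s - β) * y ^ κ + C * y ^ (-ρ') := by
  set δ := s + β * ρ' / κ
  have hδ : 0 ≤ δ := by
    have := div_nonneg hbal hκ.le
    rwa [add_div, mul_div_cancel_left₀ _ hκ.ne'] at this
  refine ⟨B * (B / A) ^ (ρ' / κ) * n ^ δ, by positivity, fun x y hx hxn hy => ?_⟩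
  rcases le_or_gt (B * x ^ β) (A * y ^ κ) with hle | hlt
  · have : B * x ^ s ≤ A * x ^ (s - β) * y ^ κ := calc
      B * x ^ s = B * x ^ β * x ^ (s - β) := by rw [mul_assoc, ← rpow_add hx]; ring_nf
      _ ≤ A * y ^ κ * x ^ (s - β) := by gcongr
      _ = A * x ^ (s - β) * y ^ κ := by ring
    have : 0 ≤ B * (B / A) ^ (ρ' / κ) * n ^ δ * y ^ (-ρ') := by positivity
    linarith
  · have hyρ : y ^ ρ' ≤ (B / A) ^ (ρ' / κ) * x ^ (β * ρ' / κ) := calc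
      y ^ ρ' = (y ^ κ) ^ (ρ' / κ) := by rw [← rpow_mul hy.le, mul_div_cancel₀ _ hκ.ne']
      _ ≤ (B / A * x ^ β) ^ (ρ' / κ) := by
          gcongr
          rw [div_mul_eq_mul_div, le_div_iff₀ hA]
          linarith
      _ = (B / A) ^ (ρ' / κ) * x ^ (β * ρ' / κ) := by
          rw [mul_rpow (by positivity) (by positivity), ← rpow_mul hx.le, mul_div_assoc]
    have hsing : B * x ^ s * y ^ ρ' ≤ B * (B / A) ^ (ρ' / κ) * n ^ δ := calc
      B * x ^ s * y ^ ρ' ≤ B * x ^ s * ((B / A) ^ (ρ' / κ) * x ^ (β * ρ' / κ)) := by gcongr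
      _ = B * (B / A) ^ (ρ' / κ) * x ^ δ := by rw [rpow_add hx]; ring
      _ ≤ B * (B / A) ^ (ρ' / κ) * n ^ δ := by gcongr
    have : B * x ^ s ≤ B * (B / A) ^ (ρ' / κ) * n ^ δ * y ^ (-ρ') := by
      rw [rpow_neg hy.le, ← div_eq_mul_inv, le_div_iff₀ (by positivity)]
      exact hsing
    have : 0 ≤ A * x ^ (s - β) * y ^ κ := by positivity
    linarith

/-- The balance between the exponents of `x ^ (-ρ) + y ^ (-ρ')` under which the singular term
`x ^ (r - ρ)` is dominated by the interaction drift `x ^ (θ - 1 - ρ) * y ^ κ` and `y ^ (-ρ')`. -/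
def AbsorbsSingularity (κ θ r ρ ρ' : ℝ) : Prop :=
  0 ≤ r ∨ κ * (ρ - r) ≤ (r + 1 - θ) * ρ'

lemma AbsorbsSingularity.exists_le {κ θ r ρ ρ' n A B : ℝ} (h : AbsorbsSingularity κ θ r ρ ρ')
    (hκ : 0 < κ) (hA : 0 < A) (hB : 0 ≤ B) (hρ' : 0 ≤ ρ') (hn : 0 < n) :
    ∃ C, 0 ≤ C ∧ ∀ x y, 0 < x → x ≤ n → 0 < y →
      B * x ^ (r - ρ) ≤ A * x ^ (θ - 1 - ρ) * y ^ κ + C * (x ^ (-ρ) + y ^ (-ρ')) := by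
  rcases h with hr | hbal
  · refine ⟨B * n ^ r, by positivity, fun x y hx hxn hy => ?_⟩
    have := mul_rpow_le_mul_rpow_of_le (e := r) (r := 0) (ρ := ρ) hB (fun _ => hr) hx hxn
    rw [sub_zero, zero_sub] at this
    have : 0 ≤ A * x ^ (θ - 1 - ρ) * y ^ κ := by positivity
    have : 0 ≤ B * n ^ r * y ^ (-ρ') := by positivity
    linarith
  · obtain ⟨C, hC, hle⟩ := exists_mul_rpow_le_of_balance (s := r - ρ) (β := r + 1 - θ)
      hκ hA hB hρ' hn (by linarith)
    refine ⟨C, hC, fun x y hx hxn hy => ?_⟩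
    have := hle x y hx hxn hy
    rw [show r - ρ - (r + 1 - θ) = θ - 1 - ρ by ring] at this
    have : 0 ≤ C * x ^ (-ρ) := by positivity
    linarith

lemma exists_absorbsSingularity {θ₁ θ₂ κ₁ κ₂ r₁ r₂ : ℝ} (M : ℝ) (hκ₁ : 0 < κ₁) (hκ₂ : 0 < κ₂)
    (hcond : (0 ≤ r₁ ∧ θ₂ - 1 < r₂ ∧ r₂ < 0) ∨
      (0 ≤ r₂ ∧ θ₁ - 1 < r₁ ∧ r₁ < 0) ∨
      (θ₁ - 1 < r₁ ∧ r₁ < 0 ∧ θ₂ - 1 < r₂ ∧ r₂ < 0 ∧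
        (r₁ + 1 - θ₁) * (r₂ + 1 - θ₂) > κ₁ * κ₂)) :
    ∃ ρ₁ ρ₂, M < ρ₁ ∧ M < ρ₂ ∧
      AbsorbsSingularity κ₁ θ₁ r₁ ρ₁ ρ₂ ∧ AbsorbsSingularity κ₂ θ₂ r₂ ρ₂ ρ₁ := by
  have large : ∀ a b : ℝ, 0 < a → ∀ᶠ t in atTop, b < a * t := fun a b ha =>
    (tendsto_id.const_mul_atTop ha).eventually_gt_atTop b
  have balanced : ∀ κ θ r t : ℝ, AbsorbsSingularity κ θ r ((r + 1 - θ) * t + r) (κ * t) :=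
    fun κ θ r t => Or.inr (by ring_nf; rfl)
  rcases hcond with ⟨h₁, h₂, -⟩ | ⟨h₂, h₁, -⟩ | ⟨h₁, -, h₂, -, h⟩
  · obtain ⟨t, ht₁, ht₂⟩ :=
      ((large (r₂ + 1 - θ₂) (M - r₂) (by linarith)).and (large κ₂ M hκ₂)).exists
    exact ⟨κ₂ * t, (r₂ + 1 - θ₂) * t + r₂, ht₂, by linarith, Or.inl h₁, balanced κ₂ θ₂ r₂ t⟩
  · obtain ⟨t, ht₁, ht₂⟩ :=
      ((large (r₁ + 1 - θ₁) (M - r₁) (by linarith)).and (large κ₁ M hκ₁)).exists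
    exact ⟨(r₁ + 1 - θ₁) * t + r₁, κ₁ * t, by linarith, ht₂, balanced κ₁ θ₁ r₁ t, Or.inl h₂⟩
  · obtain ⟨t, ht₁, ht₂, ht₃⟩ :=
      ((large (r₁ + 1 - θ₁) (M - r₁) (by linarith)).and ((large κ₁ M hκ₁).and
        (large ((r₁ + 1 - θ₁) * (r₂ + 1 - θ₂) - κ₁ * κ₂)
          (-(κ₂ * r₂) - (r₂ + 1 - θ₂) * r₁) (by linarith)))).exists
    refine ⟨(r₁ + 1 - θ₁) * t + r₁, κ₁ * t, by linarith, ht₂, balanced κ₁ θ₁ r₁ t, Or.inr ?_⟩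
    linear_combination ht₃.le

theorem lemma_t3_3_general (α₁ α₂ a₁ a₂ κ₁ κ₂ θ₁ θ₂ r₁₀ r₁₁ r₁₂ r₂₀ r₂₁ r₂₂
    b₁₀ b₁₁ b₁₂ b₂₀ b₂₁ b₂₂ : ℝ)
    (hα₁ : 1 < α₁) (hα₁' : α₁ < 2) (hα₂ : 1 < α₂) (hα₂' : α₂ < 2)
    (ha₁ : 0 < a₁) (ha₂ : 0 < a₂) (hκ₁ : 0 < κ₁) (hκ₂ : 0 < κ₂)
    (hθ₁ : 0 ≤ θ₁)
    (hb₁₀ : 0 ≤ b₁₀) (hb₁₁ : 0 ≤ b₁₁) (hb₁₂ : 0 ≤ b₁₂)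
    (hb₂₀ : 0 ≤ b₂₀) (hb₂₁ : 0 ≤ b₂₁) (hb₂₂ : 0 ≤ b₂₂)
    (r₁ r₂ : ℝ)
    (hr₁ : r₁ = rExp α₁ r₁₀ r₁₁ r₁₂ b₁₀ b₁₁ b₁₂)
    (hr₂ : r₂ = rExp α₂ r₂₀ r₂₁ r₂₂ b₂₀ b₂₁ b₂₂)
    (hcond : (0 ≤ r₁ ∧ θ₂ - 1 < r₂ ∧ r₂ < 0) ∨
      (0 ≤ r₂ ∧ θ₁ - 1 < r₁ ∧ r₁ < 0) ∨
      (θ₁ - 1 < r₁ ∧ r₁ < 0 ∧ θ₂ - 1 < r₂ ∧ r₂ < 0 ∧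
        (r₁ + 1 - θ₁) * (r₂ + 1 - θ₂) > κ₁ * κ₂)) :
    ∃ ρ₁ ρ₂ : ℝ, ρ₁ > max θ₁ θ₂ ∧ ρ₂ > max θ₁ θ₂ ∧
      ∀ n : ℕ, 1 ≤ n → ∃ C : ℝ, 0 < C ∧
        ∀ x y : ℝ, 0 < x → x ≤ (n : ℝ) → 0 < y → y ≤ (n : ℝ) →
          Lop α₁ α₂ a₁ a₂ κ₁ κ₂ θ₁ θ₂ r₁₀ r₁₁ r₁₂ r₂₀ r₂₁ r₂₂ b₁₀ b₁₁ b₁₂ b₂₀ b₂₁ b₂₂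
              (fun x y => x ^ (-ρ₁) + y ^ (-ρ₂)) x y ≤
            C * (x ^ (-ρ₁) + y ^ (-ρ₂)) := by
  subst hr₁ hr₂
  obtain ⟨ρ₁, ρ₂, hρ₁, hρ₂, habs₁, habs₂⟩ := exists_absorbsSingularity (max θ₁ θ₂) hκ₁ hκ₂ hcond
  have hρ₁0 : 0 < ρ₁ := (le_max_of_le_left hθ₁).trans_lt hρ₁
  have hρ₂0 : 0 < ρ₂ := (le_max_of_le_left hθ₁).trans_lt hρ₂
  refine ⟨ρ₁, ρ₂, hρ₁, hρ₂, fun n hn => ?_⟩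
  have hn0 : (0 : ℝ) < n := by exact_mod_cast hn
  obtain ⟨B₁, hB₁, hG₁⟩ :=
    exists_componentGenerator_rpow_neg_le hα₁ hα₁' hρ₁0.le hb₁₀ hb₁₁ hb₁₂ hn0
  obtain ⟨B₂, hB₂, hG₂⟩ :=
    exists_componentGenerator_rpow_neg_le hα₂ hα₂' hρ₂0.le hb₂₀ hb₂₁ hb₂₂ hn0
  obtain ⟨C₁, hC₁, hdom₁⟩ := habs₁.exists_le hκ₁ (mul_pos ha₁ hρ₁0) hB₁ hρ₂0.le hn0
  obtain ⟨C₂, hC₂, hdom₂⟩ := habs₂.exists_le hκ₂ (mul_pos ha₂ hρ₂0) hB₂ hρ₁0.le hn0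
  refine ⟨C₁ + C₂ + 1, by positivity, fun x y hx hxn hy hyn => ?_⟩
  have hg : 0 < x ^ (-ρ₁) + y ^ (-ρ₂) := by positivity
  rw [Lop_rpow_neg_add_rpow_neg hx hy]
  linear_combination hG₁ x hx hxn + hG₂ y hy hyn + hdom₁ x y hx hxn hy + hdom₂ y x hy hyn hx + hg

theorem lemma_t3_3 (α₁ α₂ a₁ a₂ κ₁ κ₂ θ₁ θ₂ r₁₀ r₁₁ r₁₂ r₂₀ r₂₁ r₂₂
    b₁₀ b₁₁ b₁₂ b₂₀ b₂₁ b₂₂ : ℝ)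
    (hα₁ : 1 < α₁) (hα₁' : α₁ < 2) (hα₂ : 1 < α₂) (hα₂' : α₂ < 2)
    (ha₁ : 0 < a₁) (ha₂ : 0 < a₂) (hκ₁ : 0 < κ₁) (hκ₂ : 0 < κ₂)
    (hθ₁ : 0 ≤ θ₁) (hθ₂ : 0 ≤ θ₂)
    (hr₁₀ : 0 ≤ r₁₀) (hr₁₁ : 0 ≤ r₁₁) (hr₁₂ : 0 ≤ r₁₂)
    (hr₂₀ : 0 ≤ r₂₀) (hr₂₁ : 0 ≤ r₂₁) (hr₂₂ : 0 ≤ r₂₂)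
    (hb₁₀ : 0 ≤ b₁₀) (hb₁₁ : 0 ≤ b₁₁) (hb₁₂ : 0 ≤ b₁₂)
    (hb₂₀ : 0 ≤ b₂₀) (hb₂₁ : 0 ≤ b₂₁) (hb₂₂ : 0 ≤ b₂₂)
    (hb1 : 0 < b₁₁ + b₁₂) (hb2 : 0 < b₂₁ + b₂₂)
    (r₁ r₂ : ℝ)
    (hr₁ : r₁ = rExp α₁ r₁₀ r₁₁ r₁₂ b₁₀ b₁₁ b₁₂)
    (hr₂ : r₂ = rExp α₂ r₂₀ r₂₁ r₂₂ b₂₀ b₂₁ b₂₂)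
    (hcond : (0 ≤ r₁ ∧ θ₂ - 1 < r₂ ∧ r₂ < 0) ∨
      (0 ≤ r₂ ∧ θ₁ - 1 < r₁ ∧ r₁ < 0) ∨
      (θ₁ - 1 < r₁ ∧ r₁ < 0 ∧ θ₂ - 1 < r₂ ∧ r₂ < 0 ∧
        (r₁ + 1 - θ₁) * (r₂ + 1 - θ₂) > κ₁ * κ₂)) :
    ∃ ρ₁ ρ₂ : ℝ, ρ₁ > max θ₁ θ₂ ∧ ρ₂ > max θ₁ θ₂ ∧
      ∀ n : ℕ, 1 ≤ n → ∃ C : ℝ, 0 < C ∧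
        ∀ x y : ℝ, 0 < x → x ≤ (n : ℝ) → 0 < y → y ≤ (n : ℝ) →
          Lop α₁ α₂ a₁ a₂ κ₁ κ₂ θ₁ θ₂ r₁₀ r₁₁ r₁₂ r₂₀ r₂₁ r₂₂ b₁₀ b₁₁ b₁₂ b₂₀ b₂₁ b₂₂
              (fun x y => x ^ (-ρ₁) + y ^ (-ρ₂)) x y ≤
            C * (x ^ (-ρ₁) + y ^ (-ρ₂)) :=
  lemma_t3_3_general α₁ α₂ a₁ a₂ κ₁ κ₂ θ₁ θ₂ r₁₀ r₁₁ r₁₂ r₂₀ r₂₁ r₂₂ b₁₀ b₁₁ b₁₂ b₂₀ b₂₁ b₂₂ hα₁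
    hα₁' hα₂ hα₂' ha₁ ha₂ hκ₁ hκ₂ hθ₁ hb₁₀ hb₁₁ hb₁₂ hb₂₀ hb₂₁ hb₂₂ r₁ r₂ hr₁ hr₂ hcond
end

section
/- Assume b₁₂ = b₂₂ = 0, b₁₀, b₁₁, b₂₀, b₂₁ > 0, r₁₀ − 1 = r₁₁ − 2 = r₂₀ − 1 = r₂₁ − 2 =: r, θ₁ = θ₂ =: θ, κ₁ = κ₂ =: κ, θ − 1 < r < 0, r = κ + θ − 1, and a₁a₂ ≥ b₁b₂, where b₁ = b₁₀ + b₁₁ and b₂ = b₂₀ + b₂₁. Then there exists a constant δ₀ > 0 such that, with g̃(x,y) := −δ₀ ln x − ln y (so that ℒg̃ involves only derivatives of g̃, since b₁₂ = b₂₂ = 0), one has ℒg̃(x,y) ≤ 0 for all x, y > 0. -/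
open Real MeasureTheory
open scoped Classical

/-!
With `g̃ = -δ log x - log y` every term of `ℒg̃` is a monomial: the diffusion and damping terms
give `δ b₁ x^r + b₂ y^r`, the drift gives `-(δ a₁ u + a₂ v)` with `u = x^(θ-1) y^κ` and
`v = x^κ y^(θ-1)`. Since `r = κ + θ - 1`, with `t = (1-θ)/(κ+1-θ) ∈ (0,1)` one has
`x^r = u^t v^(1-t)` and `y^r = u^(1-t) v^t`, so weighted AM-GM bounds the positive part by the
drift, once `δ` is tuned so that both constants are at most one; this is possible exactly when
`b₁ b₂ ≤ a₁ a₂`.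
-/

section LogLyapunov

variable (δ : ℝ) {x y : ℝ}

lemma pX_neg_mul_log_sub_log (hx : x ≠ 0) (y : ℝ) :
    pX (fun x y => -δ * log x - log y) x y = -δ * x⁻¹ :=
  (((hasDerivAt_log hx).const_mul (-δ)).sub_const (log y)).deriv

lemma pY_neg_mul_log_sub_log (x : ℝ) (hy : y ≠ 0) :
    pY (fun x y => -δ * log x - log y) x y = -y⁻¹ :=
  ((hasDerivAt_log hy).const_sub (-δ * log x)).deriv

lemma pXX_neg_mul_log_sub_log (hx : x ≠ 0) (y : ℝ) :
    pXX (fun x y => -δ * log x - log y) x y = δ * (x ^ 2)⁻¹ := by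
  have hpX : (fun s => pX (fun x y => -δ * log x - log y) s y)
      =ᶠ[nhds x] fun s => -δ * s⁻¹ := by
    filter_upwards [eventually_ne_nhds hx] with s hs using pX_neg_mul_log_sub_log δ hs y
  rw [pXX, hpX.deriv_eq, ((hasDerivAt_inv hx).const_mul (-δ)).deriv]
  ring

lemma pYY_neg_mul_log_sub_log (x : ℝ) (hy : y ≠ 0) :
    pYY (fun x y => -δ * log x - log y) x y = (y ^ 2)⁻¹ := by
  have hpY : (fun s => pY (fun x y => -δ * log x - log y) x s) =ᶠ[nhds y] fun s => -s⁻¹ := by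
    filter_upwards [eventually_ne_nhds hy] with s hs using pY_neg_mul_log_sub_log δ x hs
  rw [pYY, hpY.deriv_eq, HasDerivAt.deriv (f := fun s => -s⁻¹) (hasDerivAt_inv hy).neg]
  ring

lemma Lop_neg_mul_log_sub_log {α₁ α₂ a₁ a₂ κ₁ κ₂ θ₁ θ₂ r₁₀ r₁₁ r₁₂ r₂₀ r₂₁ r₂₂
    b₁₀ b₁₁ b₂₀ b₂₁ : ℝ} (hx : 0 < x) (hy : 0 < y) :
    Lop α₁ α₂ a₁ a₂ κ₁ κ₂ θ₁ θ₂ r₁₀ r₁₁ r₁₂ r₂₀ r₂₁ r₂₂ b₁₀ b₁₁ 0 b₂₀ b₂₁ 0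
        (fun x y => -δ * log x - log y) x y
      = δ * (b₁₀ * x ^ (r₁₀ - 1) + b₁₁ * x ^ (r₁₁ - 2))
          + (b₂₀ * y ^ (r₂₀ - 1) + b₂₁ * y ^ (r₂₁ - 2))
          - (δ * a₁ * (x ^ (θ₁ - 1) * y ^ κ₁) + a₂ * (x ^ κ₂ * y ^ (θ₂ - 1))) := by
  simp only [Lop, pX_neg_mul_log_sub_log δ hx.ne', pY_neg_mul_log_sub_log δ x hy.ne',
    pXX_neg_mul_log_sub_log δ hx.ne', pYY_neg_mul_log_sub_log δ x hy.ne', zero_mul, add_zero]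
  rw [rpow_sub_one hx.ne', rpow_sub_one hx.ne', rpow_sub_one hy.ne', rpow_sub_one hy.ne',
    rpow_sub hx, rpow_sub hy, rpow_two, rpow_two]
  field_simp
  ring

end LogLyapunov

lemma rpow_mul_rpow_add_rpow_mul_rpow_le_add {p q t : ℝ} (hp : 0 ≤ p) (hq : 0 ≤ q)
    (ht₀ : 0 ≤ t) (ht₁ : t ≤ 1) :
    p ^ t * q ^ (1 - t) + p ^ (1 - t) * q ^ t ≤ p + q := by
  have h₁ := geom_mean_le_arith_mean2_weighted ht₀ (sub_nonneg.2 ht₁) hp hq (by ring)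
  have h₂ := geom_mean_le_arith_mean2_weighted (sub_nonneg.2 ht₁) ht₀ hp hq (by ring)
  linarith

lemma exists_pos_mul_rpow_add_rpow_le {a₁ a₂ b₁ b₂ t : ℝ} (ha₁ : 0 < a₁) (ha₂ : 0 < a₂)
    (hb₂ : 0 < b₂) (ht₀ : 0 < t) (ht₁ : t < 1) (hab : b₁ * b₂ ≤ a₁ * a₂) :
    ∃ δ : ℝ, 0 < δ ∧ ∀ u v : ℝ, 0 < u → 0 < v →
      δ * b₁ * (u ^ t * v ^ (1 - t)) + b₂ * (u ^ (1 - t) * v ^ t) ≤ δ * a₁ * u + a₂ * v := by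
  have hs : 0 < 1 - t := sub_pos.2 ht₁
  -- `c = δ a₁` is chosen so that the `b₂`-term is absorbed with constant exactly one; the
  -- `b₁`-term then has constant `b₁ b₂ / (a₁ a₂) ≤ 1`.
  set c := (b₂ / a₂ ^ t) ^ (1 - t)⁻¹
  have hc : 0 < c := by positivity
  have hcb₂ : c ^ (1 - t) * a₂ ^ t = b₂ := by
    rw [← rpow_mul (by positivity), inv_mul_cancel₀ hs.ne', rpow_one,
      div_mul_cancel₀ _ (by positivity)]
  have hca : c ^ t * a₂ ^ (1 - t) * b₂ = c * a₂ := by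
    rw [← hcb₂, show c ^ t * a₂ ^ (1 - t) * (c ^ (1 - t) * a₂ ^ t)
      = (c ^ t * c ^ (1 - t)) * (a₂ ^ (1 - t) * a₂ ^ t) by ring, ← rpow_add hc, ← rpow_add ha₂]
    norm_num
  have hcb₁ : c / a₁ * b₁ ≤ c ^ t * a₂ ^ (1 - t) := by
    refine le_of_mul_le_mul_right ?_ hb₂
    rw [hca]
    calc c / a₁ * b₁ * b₂ = c / a₁ * (b₁ * b₂) := by ring
      _ ≤ c / a₁ * (a₁ * a₂) := by gcongr
      _ = c * a₂ := by field_simp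
  refine ⟨c / a₁, by positivity, fun u v hu hv => ?_⟩
  have hsplit (e f : ℝ) : (c * u) ^ e * (a₂ * v) ^ f = c ^ e * a₂ ^ f * (u ^ e * v ^ f) := by
    rw [mul_rpow hc.le hu.le, mul_rpow ha₂.le hv.le]; ring
  have hamgm := rpow_mul_rpow_add_rpow_mul_rpow_le_add (mul_pos hc hu).le (mul_pos ha₂ hv).le
    ht₀.le ht₁.le
  rw [hsplit, hsplit, hcb₂] at hamgm
  have hb₁ : c / a₁ * b₁ * (u ^ t * v ^ (1 - t))
      ≤ c ^ t * a₂ ^ (1 - t) * (u ^ t * v ^ (1 - t)) :=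
    mul_le_mul_of_nonneg_right hcb₁ (by positivity)
  rw [div_mul_cancel₀ _ ha₁.ne']
  linarith

lemma rpow_monomial_mul_rpow_monomial {x y : ℝ} (hx : 0 < x) (hy : 0 < y) (a b c d s t : ℝ) :
    (x ^ a * y ^ b) ^ s * (x ^ c * y ^ d) ^ t = x ^ (a * s + c * t) * y ^ (b * s + d * t) := by
  rw [mul_rpow (by positivity) (by positivity), mul_rpow (by positivity) (by positivity),
    ← rpow_mul hx.le, ← rpow_mul hy.le, ← rpow_mul hx.le, ← rpow_mul hy.le,
    rpow_add hx, rpow_add hy]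
  ring

theorem lemma_t3_4_ii_general (α₁ α₂ a₁ a₂ κ₁ κ₂ θ₁ θ₂ r₁₀ r₁₁ r₁₂ r₂₀ r₂₁ r₂₂
    b₁₀ b₁₁ b₁₂ b₂₀ b₂₁ b₂₂ : ℝ)
    (ha₁ : 0 < a₁) (ha₂ : 0 < a₂)
    (hb₁₂ : b₁₂ = 0) (hb₂₂ : b₂₂ = 0)
    (hb₂₀ : 0 < b₂₀) (hb₂₁ : 0 < b₂₁)
    (r θ κ : ℝ)
    (hre₁ : r₁₀ - 1 = r) (hre₂ : r₁₁ - 2 = r) (hre₃ : r₂₀ - 1 = r) (hre₄ : r₂₁ - 2 = r)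
    (hθe₁ : θ₁ = θ) (hθe₂ : θ₂ = θ) (hκe₁ : κ₁ = κ) (hκe₂ : κ₂ = κ)
    (hrl : θ - 1 < r) (hru : r < 0) (hrk : r = κ + θ - 1)
    (hab : a₁ * a₂ ≥ (b₁₀ + b₁₁) * (b₂₀ + b₂₁)) :
    ∃ δ₀ : ℝ, 0 < δ₀ ∧ ∀ x y : ℝ, 0 < x → 0 < y →
      Lop α₁ α₂ a₁ a₂ κ₁ κ₂ θ₁ θ₂ r₁₀ r₁₁ r₁₂ r₂₀ r₂₁ r₂₂ b₁₀ b₁₁ b₁₂ b₂₀ b₂₁ b₂₂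
          (fun x y => -δ₀ * Real.log x - Real.log y) x y ≤ 0 := by
  subst hb₁₂ hb₂₂ θ₁ θ₂ κ₁ κ₂
  set t := (1 - θ) / (κ + 1 - θ)
  have hden : 0 < κ + 1 - θ := by linarith
  have ht₀ : 0 < t := div_pos (by linarith) hden
  have ht₁ : t < 1 := (div_lt_one hden).2 (by linarith)
  have hxr : (θ - 1) * t + κ * (1 - t) = r := by simp only [t]; field_simp; rw [hrk]; ring
  have hy0 : κ * t + (θ - 1) * (1 - t) = 0 := by simp only [t]; field_simp; ring
  obtain ⟨δ₀, hδ₀, hbound⟩ := exists_pos_mul_rpow_add_rpow_le ha₁ ha₂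
    (add_pos hb₂₀ hb₂₁) ht₀ ht₁ hab.le
  refine ⟨δ₀, hδ₀, fun x y hx hy => ?_⟩
  have hmean := hbound (x ^ (θ - 1) * y ^ κ) (x ^ κ * y ^ (θ - 1)) (by positivity)
    (by positivity)
  rw [rpow_monomial_mul_rpow_monomial hx hy, rpow_monomial_mul_rpow_monomial hx hy, hxr, hy0,
    show (θ - 1) * (1 - t) + κ * t = 0 by linarith,
    show κ * (1 - t) + (θ - 1) * t = r by linarith,
    rpow_zero, rpow_zero, mul_one, one_mul] at hmean
  rw [Lop_neg_mul_log_sub_log δ₀ hx hy, hre₁, hre₂, hre₃, hre₄]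
  linear_combination hmean

theorem lemma_t3_4_ii (α₁ α₂ a₁ a₂ κ₁ κ₂ θ₁ θ₂ r₁₀ r₁₁ r₁₂ r₂₀ r₂₁ r₂₂
    b₁₀ b₁₁ b₁₂ b₂₀ b₂₁ b₂₂ : ℝ)
    (hα₁ : 1 < α₁) (hα₁' : α₁ < 2) (hα₂ : 1 < α₂) (hα₂' : α₂ < 2)
    (ha₁ : 0 < a₁) (ha₂ : 0 < a₂) (hκ₁ : 0 < κ₁) (hκ₂ : 0 < κ₂)
    (hθ₁ : 0 ≤ θ₁) (hθ₂ : 0 ≤ θ₂)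
    (hr₁₀ : 0 ≤ r₁₀) (hr₁₁ : 0 ≤ r₁₁) (hr₂₀ : 0 ≤ r₂₀) (hr₂₁ : 0 ≤ r₂₁)
    (hb₁₂ : b₁₂ = 0) (hb₂₂ : b₂₂ = 0)
    (hb₁₀ : 0 < b₁₀) (hb₁₁ : 0 < b₁₁) (hb₂₀ : 0 < b₂₀) (hb₂₁ : 0 < b₂₁)
    (r θ κ : ℝ)
    (hre₁ : r₁₀ - 1 = r) (hre₂ : r₁₁ - 2 = r) (hre₃ : r₂₀ - 1 = r) (hre₄ : r₂₁ - 2 = r)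
    (hθe₁ : θ₁ = θ) (hθe₂ : θ₂ = θ) (hκe₁ : κ₁ = κ) (hκe₂ : κ₂ = κ)
    (hrl : θ - 1 < r) (hru : r < 0) (hrk : r = κ + θ - 1)
    (hab : a₁ * a₂ ≥ (b₁₀ + b₁₁) * (b₂₀ + b₂₁)) :
    ∃ δ₀ : ℝ, 0 < δ₀ ∧ ∀ x y : ℝ, 0 < x → 0 < y →
      Lop α₁ α₂ a₁ a₂ κ₁ κ₂ θ₁ θ₂ r₁₀ r₁₁ r₁₂ r₂₀ r₂₁ r₂₂ b₁₀ b₁₁ b₁₂ b₂₀ b₂₁ b₂₂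
          (fun x y => -δ₀ * Real.log x - Real.log y) x y ≤ 0 :=
  lemma_t3_4_ii_general α₁ α₂ a₁ a₂ κ₁ κ₂ θ₁ θ₂ r₁₀ r₁₁ r₁₂ r₂₀ r₂₁ r₂₂ b₁₀ b₁₁ b₁₂ b₂₀ b₂₁ b₂₂ ha₁
    ha₂ hb₁₂ hb₂₂ hb₂₀ hb₂₁ r θ κ hre₁ hre₂ hre₃ hre₄ hθe₁ hθe₂ hκe₁ hκe₂ hrl hru hrk hab
end
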